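/- arXiv:1310.8186 — 6 statements merged into one kernel-verified Lean document; each statement's English description precedes it below -/
import Mathlib

section
/- A 2-connected subcubic graph that contains two edge-disjoint odd cycles contains a skewed theta, i.e., two vertices joined by three edge-disjoint paths, two of odd length and one of even length. -/
open SimpleGraph

attribute [local instance] Classical.propDecidable

universe u

variable {V : Type u}

/-- A graph is subcubic if every vertex has degree (number of neighbours) at most 3. -/
def Subcubic (G : SimpleGraph V) : Prop := ∀ v : V, (G.neighborSet v).ncard ≤ 3

/-- Two walks are edge-disjoint if they share no edge. -/
def WalkEdgeDisjoint {G : SimpleGraph V} {a b c d : V}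
    (p : G.Walk a b) (q : G.Walk c d) : Prop :=
  ∀ e, e ∈ p.edges → e ∉ q.edges

/-- A skewed theta: two branch vertices joined by three pairwise edge-disjoint paths,
two of odd length and one of even length. -/
def HasSkewedTheta (G : SimpleGraph V) : Prop :=
  ∃ (a b : V) (p₁ p₂ p₃ : G.Walk a b),
    p₁.IsPath ∧ p₂.IsPath ∧ p₃.IsPath ∧
    WalkEdgeDisjoint p₁ p₂ ∧ WalkEdgeDisjoint p₁ p₃ ∧ WalkEdgeDisjoint p₂ p₃ ∧
    Odd p₁.length ∧ Odd p₂.length ∧ Even p₃.length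

/-- A graph is 2-connected: at least 3 vertices and deleting any vertex leaves it connected. -/
def TwoConnected (G : SimpleGraph V) : Prop :=
  3 ≤ Nat.card V ∧ ∀ v : V, ((⊤ : G.Subgraph).deleteVerts {v}).coe.Connected

/-- Given a bipartition with first class `A`, an edge is `P`-odd if both of its
endvertices lie in the same class. -/
def POdd (A : Set V) (e : Sym2 V) : Prop :=
  (∀ x ∈ e, x ∈ A) ∨ (∀ x ∈ e, x ∉ A)

/-- A stable (independent) set of vertices. -/
def StableSet (G : SimpleGraph V) (s : Set V) : Prop :=
  s.Pairwise fun a b => ¬ G.Adj a b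

/-- `u` is the centre of an induced claw. -/
def HasInducedClawAt (G : SimpleGraph V) (u : V) : Prop :=
  ∃ a b c : V, G.Adj u a ∧ G.Adj u b ∧ G.Adj u c ∧
    a ≠ b ∧ a ≠ c ∧ b ≠ c ∧ ¬ G.Adj a b ∧ ¬ G.Adj a c ∧ ¬ G.Adj b c

/-- A graph is claw-free if it has no induced claw. -/
def ClawFree (G : SimpleGraph V) : Prop := ∀ u : V, ¬ HasInducedClawAt G u

/-- The t-contraction of `G` at a vertex `v`: the neighbours of `v` are removed,
and `v` becomes adjacent to all former second neighbours. -/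
def tContract (G : SimpleGraph V) (v : V) :
    SimpleGraph {w : V // w ∉ G.neighborSet v} :=
  SimpleGraph.fromRel (fun a b =>
    G.Adj a b ∨ ((a : V) = v ∧ ∃ n : V, G.Adj v n ∧ G.Adj n (b : V)))

/-- One step in the formation of a t-minor: delete a vertex, or perform a
t-contraction at a vertex whose neighbourhood is stable. -/
def TStep {W W' : Type u} (G : SimpleGraph W) (H : SimpleGraph W') : Prop :=
  (∃ v : W, Nonempty (H ≃g (G.induce {w : W | w ≠ v}))) ∨
  (∃ v : W, StableSet G (G.neighborSet v) ∧ Nonempty (H ≃g tContract G v))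

/-- `H` is a t-minor of `G` if it is obtained by a series of vertex deletions
and t-contractions. -/
def IsTMinor {W W' : Type u} (G : SimpleGraph W) (H : SimpleGraph W') : Prop :=
  Relation.ReflTransGen (fun a b : (Σ U : Type u, SimpleGraph U) => TStep a.2 b.2)
    ⟨W, G⟩ ⟨W', H⟩

/-- The stable set polytope of `G`: the convex hull of characteristic vectors of stable sets. -/
noncomputable def stableSetPolytope (G : SimpleGraph V) : Set (V → ℝ) :=
  convexHull ℝ {x : V → ℝ | ∃ s : Set V, StableSet G s ∧ x = s.indicator 1}

/-- The polytope given by non-negativity, edge and odd-cycle inequalities. -/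
def TSTAB (G : SimpleGraph V) [Fintype V] : Set (V → ℝ) :=
  {x : V → ℝ |
    (∀ v : V, 0 ≤ x v ∧ x v ≤ 1) ∧
    (∀ u v : V, G.Adj u v → x u + x v ≤ 1) ∧
    (∀ (v : V) (c : G.Walk v v), c.IsCycle → Odd c.length →
      ∑ u ∈ c.support.toFinset, x u ≤ ((c.length / 2 : ℕ) : ℝ))}

/-- A graph is t-perfect if its stable set polytope coincides with `TSTAB`. -/
def TPerfect (G : SimpleGraph V) [Fintype V] : Prop :=
  stableSetPolytope G = TSTAB G

/-- The complete graph on four vertices. -/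
def K4 : SimpleGraph (Fin 4) := ⊤

/-- The 5-wheel: a 5-cycle (on `0,…,4`) plus a hub (`5`) adjacent to all cycle vertices. -/
def W5 : SimpleGraph (Fin 6) :=
  SimpleGraph.fromRel (fun i j =>
    (j : ℕ) = 5 ∨ ((i : ℕ) < 5 ∧ (j : ℕ) < 5 ∧ (j : ℕ) = ((i : ℕ) + 1) % 5))

/-- The 5-cycle. -/
def C5 : SimpleGraph (Fin 5) :=
  SimpleGraph.fromRel (fun i j => (j : ℕ) = ((i : ℕ) + 1) % 5)

/-- An induced path of `G` all of whose vertices lie in `S`. -/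
def IsInducedPathIn (G : SimpleGraph V) (S : Set V) {a b : V} (p : G.Walk a b) : Prop :=
  p.IsPath ∧ (∀ x ∈ p.support, x ∈ S) ∧
    ∀ x y : V, x ∈ p.support → y ∈ p.support → G.Adj x y → s(x, y) ∈ p.edges

/-- The data of a skewed prism: two triangles `x₁x₂x₃`, `y₁y₂y₃` joined by three
vertex-disjoint induced paths `P₁,P₂,P₃`, where `P₁,P₂` are even and `P₃` is odd, and
the triangle edges are the only edges between the paths. -/
def IsSkewedPrism (G : SimpleGraph V) (x₁ x₂ x₃ y₁ y₂ y₃ : V)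
    (P₁ : G.Walk x₁ y₁) (P₂ : G.Walk x₂ y₂) (P₃ : G.Walk x₃ y₃) : Prop :=
  P₁.IsPath ∧ P₂.IsPath ∧ P₃.IsPath ∧
  Even P₁.length ∧ Even P₂.length ∧ Odd P₃.length ∧
  P₁.support.Disjoint P₂.support ∧ P₁.support.Disjoint P₃.support ∧
  P₂.support.Disjoint P₃.support ∧
  G.Adj x₁ x₂ ∧ G.Adj x₁ x₃ ∧ G.Adj x₂ x₃ ∧
  G.Adj y₁ y₂ ∧ G.Adj y₁ y₃ ∧ G.Adj y₂ y₃ ∧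
  (∀ u w : V, u ∈ P₁.support ++ P₂.support ++ P₃.support →
    w ∈ P₁.support ++ P₂.support ++ P₃.support →
    (G.Adj u w ↔ (s(u, w) ∈ P₁.edges ∨ s(u, w) ∈ P₂.edges ∨ s(u, w) ∈ P₃.edges ∨
      s(u, w) ∈ [s(x₁, x₂), s(x₁, x₃), s(x₂, x₃), s(y₁, y₂), s(y₁, y₃), s(y₂, y₃)])))

/-- `G` contains a skewed prism as an induced subgraph. -/
def HasSkewedPrism (G : SimpleGraph V) : Prop :=
  ∃ (x₁ x₂ x₃ y₁ y₂ y₃ : V) (P₁ : G.Walk x₁ y₁) (P₂ : G.Walk x₂ y₂) (P₃ : G.Walk x₃ y₃),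
    IsSkewedPrism G x₁ x₂ x₃ y₁ y₂ y₃ P₁ P₂ P₃

/-- A `u`–`v`-linked obstruction with all vertices inside `S`: four vertex-disjoint
induced paths `R = u…r`, `S' = v…s`, `X = x₁…x₂`, `Y = y₁…y₂` with triangles
`r,x₁,y₁` and `s,x₂,y₂`, the triangle edges being the only edges between the paths,
and `X` of even length. -/
def IsLinkedObstructionIn (G : SimpleGraph V) (S : Set V) (u v : V) : Prop :=
  ∃ (r s x₁ x₂ y₁ y₂ : V) (R : G.Walk u r) (S' : G.Walk v s)
    (X : G.Walk x₁ x₂) (Y : G.Walk y₁ y₂),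
    R.IsPath ∧ S'.IsPath ∧ X.IsPath ∧ Y.IsPath ∧ Even X.length ∧
    (∀ w ∈ R.support, w ∈ S) ∧ (∀ w ∈ S'.support, w ∈ S) ∧
    (∀ w ∈ X.support, w ∈ S) ∧ (∀ w ∈ Y.support, w ∈ S) ∧
    R.support.Disjoint S'.support ∧ R.support.Disjoint X.support ∧
    R.support.Disjoint Y.support ∧ S'.support.Disjoint X.support ∧
    S'.support.Disjoint Y.support ∧ X.support.Disjoint Y.support ∧
    G.Adj r x₁ ∧ G.Adj r y₁ ∧ G.Adj x₁ y₁ ∧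
    G.Adj s x₂ ∧ G.Adj s y₂ ∧ G.Adj x₂ y₂ ∧
    (∀ a b : V, a ∈ R.support ++ S'.support ++ X.support ++ Y.support →
      b ∈ R.support ++ S'.support ++ X.support ++ Y.support →
      (G.Adj a b ↔ (s(a, b) ∈ R.edges ∨ s(a, b) ∈ S'.edges ∨ s(a, b) ∈ X.edges ∨
        s(a, b) ∈ Y.edges ∨
        s(a, b) ∈ [s(r, x₁), s(r, y₁), s(x₁, y₁), s(s, x₂), s(s, y₂), s(x₂, y₂)])))

/-! In a subcubic graph, edge-disjoint cycles are vertex-disjoint. By the fan lemma, applied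
from a vertex `a` of `C₁` towards `C₂` and cut at the last visit to `C₁`, there are two disjoint
paths `P`, `Q` joining vertices `p₁, q₁` of `C₁` to distinct vertices `p₂, q₂` of `C₂`; here
`p₁ ≠ q₁`, since otherwise `a` would have two cycle neighbours and two further ones. As `C₂` is
odd, one of its `p₂`–`q₂` arcs closes `P` and `Q` into an odd `p₁`–`q₁` path avoiding the edges
of `C₁`, and as `C₁` is odd, its two `p₁`–`q₁` arcs have different parities. -/

namespace SimpleGraph.Walk

variable {G : SimpleGraph V} {u v w : V}

lemma IsPath.append {p : G.Walk u v} {q : G.Walk v w} (hp : p.IsPath) (hq : q.IsPath)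
    (h : ∀ x ∈ p.support, x ∈ q.support → x = v) : (p.append q).IsPath := by
  refine IsPath.mk' ?_
  rw [support_append]
  have hq' := hq.support_nodup
  rw [← cons_tail_support, List.nodup_cons] at hq'
  refine hp.support_nodup.append hq'.2 fun x hxp hxq => ?_
  obtain rfl := h x hxp (List.mem_of_mem_tail hxq)
  exact hq'.1 hxq

lemma exists_isPath_to_first_mem (S : Set V) (p : G.Walk u v) (hv : v ∈ S) :
    ∃ b ∈ S, ∃ q : G.Walk u b, q.IsPath ∧ q.support ⊆ p.support ∧
      ∀ x ∈ q.support, x ∈ S → x = b := by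
  induction p with
  | nil => exact ⟨_, hv, nil, .nil, by simp, by simp⟩
  | @cons u _ _ hadj p ih =>
    by_cases hu : u ∈ S
    · exact ⟨u, hu, nil, .nil, by simp, by simp⟩
    obtain ⟨b, hb, q, -, hqp, hqS⟩ := ih hv
    refine ⟨b, hb, (cons hadj q).bypass, bypass_isPath _, ?_, fun x hx hxS => ?_⟩
    · exact List.Subset.trans (support_bypass_subset_support _) (List.cons_subset_cons _ hqp)
    · rcases List.mem_cons.mp (support_bypass_subset_support _ hx) with rfl | hx
      exacts [absurd hxS hu, hqS x hx hxS]

lemma exists_isPath_from_last_mem (S : Set V) (p : G.Walk u v) (hu : u ∈ S) :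
    ∃ b ∈ S, ∃ q : G.Walk b v, q.IsPath ∧ q.support ⊆ p.support ∧
      ∀ x ∈ q.support, x ∈ S → x = b := by
  obtain ⟨b, hb, q, hq, hqp, hqS⟩ := exists_isPath_to_first_mem S p.reverse hu
  refine ⟨b, hb, q.reverse, hq.reverse, ?_, fun x hx => hqS x (by simpa using hx)⟩
  simpa using hqp

lemma disjoint_edges_of_forall_mem_support_eq {x y : V} {p : G.Walk u v} {q : G.Walk x y}
    (m : V) (h : ∀ z ∈ p.support, z ∈ q.support → z = m) : p.edges.Disjoint q.edges := by
  intro e hep heq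
  induction e using Sym2.ind with
  | _ s t =>
    have hs := h s (fst_mem_support_of_mem_edges p hep) (fst_mem_support_of_mem_edges q heq)
    have ht := h t (snd_mem_support_of_mem_edges p hep) (snd_mem_support_of_mem_edges q heq)
    exact (adj_of_mem_edges p hep).ne (hs.trans ht.symm)

lemma start_notMem_support_dropUntil {p : G.Walk u v} (hp : p.IsPath) (hw : w ∈ p.support)
    (hwu : w ≠ u) : u ∉ (p.dropUntil w hw).support := fun hu =>
  (p.take_spec hw ▸ hp).ne_of_mem_support_of_append hwu.symm
    (p.takeUntil w hw).start_mem_support hu rfl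

lemma IsCycle.exists_arcs {c : G.Walk w w} (hc : c.IsCycle) (hu : u ∈ c.support)
    (hv : v ∈ c.support) (huv : u ≠ v) :
    ∃ P Q : G.Walk u v, P.IsPath ∧ Q.IsPath ∧ P.length + Q.length = c.length ∧
      P.support ⊆ c.support ∧ Q.support ⊆ c.support ∧ P.edges ⊆ c.edges ∧
      Q.edges ⊆ c.edges ∧ P.edges.Disjoint Q.edges := by
  set d := c.rotate u hu
  have hd : d.IsCycle := hc.rotate hu
  have hv' : v ∈ d.support := (mem_support_rotate_iff c u hu).mpr hv
  have hsplit := d.take_spec hv'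
  have hQ : (d.dropUntil v hv').IsPath :=
    (hsplit ▸ hd).isPath_of_append_right (not_nil_of_ne huv)
  have hsupp : d.support ⊆ c.support := fun x hx => (mem_support_rotate_iff c u hu).mp hx
  have hedges : d.edges ⊆ c.edges := (rotate_edges c u hu).perm.subset
  refine ⟨d.takeUntil v hv', (d.dropUntil v hv').reverse, hd.isPath_takeUntil hv', hQ.reverse,
    ?_, List.Subset.trans (support_takeUntil_subset_support d hv') hsupp, ?_,
    List.Subset.trans (edges_takeUntil_subset_edges d hv') hedges, ?_, ?_⟩
  · rw [length_reverse, ← length_append, hsplit, length_rotate]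
  · simpa using List.Subset.trans (support_dropUntil_subset_support d hv') hsupp
  · simpa using List.Subset.trans (edges_dropUntil_subset_edges d hv') hedges
  · simpa using hd.isTrail.disjoint_edges_takeUntil_dropUntil hv'

lemma IsCycle.exists_arcs_of_odd {c : G.Walk w w} (hc : c.IsCycle) (ho : Odd c.length)
    (hu : u ∈ c.support) (hv : v ∈ c.support) (huv : u ≠ v) (k : ℕ) :
    ∃ P Q : G.Walk u v, P.IsPath ∧ Q.IsPath ∧ Odd (k + P.length) ∧ Even (k + Q.length) ∧
      P.support ⊆ c.support ∧ P.edges ⊆ c.edges ∧ Q.edges ⊆ c.edges ∧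
      P.edges.Disjoint Q.edges := by
  obtain ⟨P, Q, hP, hQ, hlen, hPs, hQs, hPe, hQe, hPQ⟩ := hc.exists_arcs hu hv huv
  rw [Nat.odd_iff] at ho
  rcases Nat.even_or_odd (k + P.length) with h | h
  · refine ⟨Q, P, hQ, hP, ?_, h, hQs, hQe, hPe, hPQ.symm⟩
    rw [Nat.even_iff] at h; rw [Nat.odd_iff]; omega
  · refine ⟨P, Q, hP, hQ, h, ?_, hPs, hPe, hQe, hPQ⟩
    rw [Nat.odd_iff] at h; rw [Nat.even_iff]; omega

end SimpleGraph.Walk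

open SimpleGraph Walk

section

variable {G : SimpleGraph V} {a b : V}

lemma Subcubic.false_of_four_adj [Finite V] (h3 : Subcubic G) {v x₁ x₂ x₃ x₄ : V}
    (h₁ : G.Adj v x₁) (h₂ : G.Adj v x₂) (h₃ : G.Adj v x₃) (h₄ : G.Adj v x₄)
    (h₁₂ : x₁ ≠ x₂) (h₁₃ : x₁ ≠ x₃) (h₁₄ : x₁ ≠ x₄) (h₂₃ : x₂ ≠ x₃) (h₂₄ : x₂ ≠ x₄)
    (h₃₄ : x₃ ≠ x₄) : False := by
  have hsub : ({x₁, x₂, x₃, x₄} : Set V) ⊆ G.neighborSet v := by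
    rintro z (rfl | rfl | rfl | rfl) <;> assumption
  have hcard : ({x₁, x₂, x₃, x₄} : Set V).ncard = 4 := by
    rw [Set.ncard_insert_of_notMem (by simp [h₁₂, h₁₃, h₁₄]),
      Set.ncard_insert_of_notMem (by simp [h₂₃, h₂₄]), Set.ncard_pair h₃₄]
  have := Set.ncard_le_ncard hsub
  have := h3 v
  omega

lemma Subcubic.eq_of_adj_of_notMem_support [Finite V] (h3 : Subcubic G) {c : G.Walk a a}
    (hc : c.IsCycle) {x y : V} (hx : G.Adj a x) (hy : G.Adj a y) (hxc : x ∉ c.support)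
    (hyc : y ∉ c.support) : x = y := by
  by_contra hxy
  have hs := c.getVert_mem_support 1
  have hp := c.getVert_mem_support (c.length - 1)
  exact h3.false_of_four_adj (c.adj_snd hc.not_nil) (c.adj_penultimate hc.not_nil).symm hx hy
    hc.snd_ne_penultimate (by rintro rfl; exact hxc hs) (by rintro rfl; exact hyc hs)
    (by rintro rfl; exact hxc hp) (by rintro rfl; exact hyc hp) hxy

lemma Subcubic.disjoint_support_of_disjoint_edges [Finite V] (h3 : Subcubic G)
    {c₁ : G.Walk a a} {c₂ : G.Walk b b} (hc₁ : c₁.IsCycle) (hc₂ : c₂.IsCycle)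
    (h : c₁.edges.Disjoint c₂.edges) : c₁.support.Disjoint c₂.support := by
  intro v hv₁ hv₂
  set d₁ := c₁.rotate v hv₁
  set d₂ := c₂.rotate v hv₂
  have hd₁ : d₁.IsCycle := hc₁.rotate hv₁
  have hd₂ : d₂.IsCycle := hc₂.rotate hv₂
  have e₁ : ∀ e ∈ d₁.edges, e ∈ c₁.edges := fun e he => (rotate_edges c₁ v hv₁).perm.subset he
  have e₂ : ∀ e ∈ d₂.edges, e ∈ c₂.edges := fun e he => (rotate_edges c₂ v hv₂).perm.subset he
  have s₁ := e₁ _ (d₁.mk_start_snd_mem_edges hd₁.not_nil)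
  have p₁ := e₁ _ (d₁.mk_penultimate_end_mem_edges hd₁.not_nil)
  have s₂ := e₂ _ (d₂.mk_start_snd_mem_edges hd₂.not_nil)
  have p₂ := e₂ _ (d₂.mk_penultimate_end_mem_edges hd₂.not_nil)
  rw [Sym2.eq_swap] at p₁ p₂
  exact h3.false_of_four_adj (d₁.adj_snd hd₁.not_nil) (d₁.adj_penultimate hd₁.not_nil).symm
    (d₂.adj_snd hd₂.not_nil) (d₂.adj_penultimate hd₂.not_nil).symm hd₁.snd_ne_penultimate
    (fun hh => h s₁ (hh ▸ s₂)) (fun hh => h s₁ (hh ▸ p₂)) (fun hh => h p₁ (hh ▸ s₂))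
    (fun hh => h p₁ (hh ▸ p₂)) hd₂.snd_ne_penultimate

end

section

variable {G : SimpleGraph V}

lemma TwoConnected.finite (h : TwoConnected G) : Finite V :=
  Nat.finite_of_card_ne_zero (by have := h.1; omega)

lemma exists_walk_notMem_support
    (hconn : ∀ v : V, ((⊤ : G.Subgraph).deleteVerts {v}).coe.Connected)
    {v x y : V} (hx : x ≠ v) (hy : y ≠ v) : ∃ p : G.Walk x y, v ∉ p.support := by
  obtain ⟨p⟩ := (hconn v).preconnected ⟨x, by simpa⟩ ⟨y, by simpa⟩
  refine ⟨p.map (Subgraph.hom _), fun hv => ?_⟩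
  obtain ⟨⟨z, hz⟩, -, hzv⟩ := List.mem_map.mp ((Walk.support_map _ p).symm ▸ hv)
  simp only [Subgraph.hom_apply] at hzv
  simp [hzv] at hz

lemma TwoConnected.connected (h : TwoConnected G) : G.Connected := by
  have := h.finite
  have : Nonempty V := Nat.card_pos_iff.mp (by have := h.1; omega) |>.1
  refine ⟨fun x y => ?_⟩
  obtain ⟨z, hzx, hzy⟩ : ∃ z, z ≠ x ∧ z ≠ y := by
    by_contra! hz
    have hsub : (Set.univ : Set V) ⊆ {x, y} := fun z _ => by
      rcases eq_or_ne z x with rfl | hzx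
      exacts [Or.inl rfl, Or.inr (hz z hzx)]
    have := Set.ncard_le_ncard hsub
    have := Set.ncard_insert_le x {y}
    rw [Set.ncard_univ, Set.ncard_singleton] at *
    have := h.1
    omega
  obtain ⟨p, -⟩ := exists_walk_notMem_support h.2 hzx.symm hzy.symm
  exact p.reachable

end

def HasTwoFan (G : SimpleGraph V) (a : V) (B : Set V) : Prop :=
  ∃ (b₁ b₂ : V) (P : G.Walk a b₁) (Q : G.Walk a b₂), b₁ ∈ B ∧ b₂ ∈ B ∧ b₁ ≠ b₂ ∧
    P.IsPath ∧ Q.IsPath ∧ (∀ x ∈ P.support, x ∈ B → x = b₁) ∧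
    (∀ x ∈ Q.support, x ∈ B → x = b₂) ∧ ∀ x ∈ P.support, x ∈ Q.support → x = a

section

variable {G : SimpleGraph V} {B : Set V} {a v b₁ b₂ d : V}

lemma hasTwoFan_of_mem_fan_path (hav : G.Adj a v) {P : G.Walk v b₁} {Q : G.Walk v b₂}
    (hb₁ : b₁ ∈ B) (hb₂ : b₂ ∈ B) (hb : b₁ ≠ b₂) (hP : P.IsPath) (hQ : Q.IsPath)
    (hPB : ∀ x ∈ P.support, x ∈ B → x = b₁) (hQB : ∀ x ∈ Q.support, x ∈ B → x = b₂)
    (hPQ : ∀ x ∈ P.support, x ∈ Q.support → x = v) (haB : a ∉ B) (haP : a ∈ P.support) :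
    HasTwoFan G a B := by
  have haQ : a ∉ Q.support := fun h => hav.ne (hPQ a haP h)
  refine ⟨b₁, b₂, P.dropUntil a haP, cons hav Q, hb₁, hb₂, hb, hP.dropUntil haP,
    hQ.cons haQ, fun x hx => hPB x (support_dropUntil_subset_support P haP hx), ?_, ?_⟩
  · rintro x (_ | ⟨_, hx⟩) hxB
    exacts [absurd hxB haB, hQB x hx hxB]
  · rintro x hx (_ | ⟨_, hxQ⟩)
    · rfl
    · obtain rfl := hPQ x (support_dropUntil_subset_support P haP hx) hxQ
      exact absurd hx (start_notMem_support_dropUntil hP haP hav.ne)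

lemma hasTwoFan_of_path_to_new_end (hav : G.Adj a v) {P : G.Walk v b₁} {R : G.Walk a d}
    (hb₁ : b₁ ∈ B) (hP : P.IsPath) (hPB : ∀ x ∈ P.support, x ∈ B → x = b₁) (haB : a ∉ B)
    (haP : a ∉ P.support) (hdB : d ∈ B) (hdb : d ≠ b₁) (hR : R.IsPath)
    (hRd : ∀ x ∈ R.support, x ∈ P.support ∨ x ∈ B → x = d) : HasTwoFan G a B := by
  refine ⟨b₁, d, cons hav P, R, hb₁, hdB, hdb.symm, hP.cons haP, hR, ?_,
    fun x hx hxB => hRd x hx (.inr hxB), ?_⟩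
  · rintro x (_ | ⟨_, hx⟩) hxB
    exacts [absurd hxB haB, hPB x hx hxB]
  · rintro x (_ | ⟨_, hx⟩) hxR
    · rfl
    · obtain rfl := hRd x hxR (.inl hx)
      exact absurd (hPB x hx hdB) hdb

lemma hasTwoFan_of_path_to_fan_path (hav : G.Adj a v) {P : G.Walk v b₁} {Q : G.Walk v b₂}
    {R : G.Walk a d} (hb₁ : b₁ ∈ B) (hb₂ : b₂ ∈ B) (hb : b₁ ≠ b₂) (hP : P.IsPath)
    (hQ : Q.IsPath) (hPB : ∀ x ∈ P.support, x ∈ B → x = b₁)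
    (hQB : ∀ x ∈ Q.support, x ∈ B → x = b₂) (hPQ : ∀ x ∈ P.support, x ∈ Q.support → x = v)
    (haB : a ∉ B) (haQ : a ∉ Q.support) (hdP : d ∈ P.support) (hdB : d ∉ B) (hdv : d ≠ v)
    (hR : R.IsPath) (hRd : ∀ x ∈ R.support, x ∈ P.support ∨ x ∈ Q.support ∨ x ∈ B → x = d) :
    HasTwoFan G a B := by
  have hPd := support_dropUntil_subset_support P hdP
  refine ⟨b₁, b₂, R.append (P.dropUntil d hdP), cons hav Q, hb₁, hb₂, hb,
    hR.append (hP.dropUntil hdP) fun x hxR hx => hRd x hxR (.inl (hPd hx)), hQ.cons haQ,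
    ?_, ?_, ?_⟩
  · intro x hx hxB
    rcases (mem_support_append_iff _ _).mp hx with hx | hx
    · obtain rfl := hRd x hx (.inr (.inr hxB))
      exact absurd hxB hdB
    · exact hPB x (hPd hx) hxB
  · rintro x (_ | ⟨_, hx⟩) hxB
    exacts [absurd hxB haB, hQB x hx hxB]
  · rintro x hx (_ | ⟨_, hxQ⟩)
    · rfl
    rcases (mem_support_append_iff _ _).mp hx with hx | hx
    · obtain rfl := hRd x hx (.inr (.inl hxQ))
      exact absurd (hPQ x hdP hxQ) hdv
    · obtain rfl := hPQ x (hPd hx) hxQ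
      exact absurd hx (start_notMem_support_dropUntil hP hdP hdv)

end

section

variable {G : SimpleGraph V} {B : Set V}

lemma hasTwoFan_of_walk (hconn : ∀ v : V, ((⊤ : G.Subgraph).deleteVerts {v}).coe.Connected)
    (hB : B.Nontrivial) {a c : V} (w : G.Walk a c) (hc : c ∈ B) (ha : a ∉ B) :
    HasTwoFan G a B := by
  induction w with
  | nil => exact absurd hc ha
  | @cons a v c hav w ih =>
    by_cases hvB : v ∈ B
    · obtain ⟨b, hbB, hbv⟩ := hB.exists_ne v
      obtain ⟨R₀, hvR₀⟩ := exists_walk_notMem_support hconn hav.ne hbv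
      obtain ⟨d, hdB, R, hR, hRR₀, hRB⟩ := exists_isPath_to_first_mem B R₀ hbB
      have hvR : v ∉ R.support := fun h => hvR₀ (hRR₀ h)
      refine hasTwoFan_of_path_to_new_end hav (P := nil) hvB .nil (by simp) ha
        (by simpa using hav.ne) hdB (fun h => hvR (h ▸ R.end_mem_support)) hR ?_
      rintro x hx (hxv | hxB)
      · exact absurd ((List.mem_singleton.mp hxv) ▸ hx) hvR
      · exact hRB x hx hxB
    -- extend the fan at `v` by a path from `a` that avoids `v` until it hits the fan or `B`
    obtain ⟨b₁, b₂, P, Q, hb₁, hb₂, hb, hP, hQ, hPB, hQB, hPQ⟩ := ih hc hvB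
    have hQP : ∀ x ∈ Q.support, x ∈ P.support → x = v := fun x hxQ hxP => hPQ x hxP hxQ
    by_cases haP : a ∈ P.support
    · exact hasTwoFan_of_mem_fan_path hav hb₁ hb₂ hb hP hQ hPB hQB hPQ ha haP
    by_cases haQ : a ∈ Q.support
    · exact hasTwoFan_of_mem_fan_path hav hb₂ hb₁ hb.symm hQ hP hQB hPB hQP ha haQ
    obtain ⟨R₀, hvR₀⟩ := exists_walk_notMem_support hconn hav.ne fun h => hvB (h ▸ hb₁)
    obtain ⟨d, hd, R, hR, hRR₀, hRd⟩ :=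
      exists_isPath_to_first_mem {x | x ∈ P.support ∨ x ∈ Q.support ∨ x ∈ B} R₀ (.inr (.inr hb₁))
    have hdv : d ≠ v := fun h => hvR₀ (hRR₀ (h ▸ R.end_mem_support))
    by_cases hdB : d ∈ B
    · by_cases hdb₁ : d = b₁
      · exact hasTwoFan_of_path_to_new_end hav hb₂ hQ hQB ha haQ hdB (hdb₁ ▸ hb) hR
          fun x hx h => hRd x hx (h.elim (.inr ∘ .inl) (.inr ∘ .inr))
      · exact hasTwoFan_of_path_to_new_end hav hb₁ hP hPB ha haP hdB hdb₁ hR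
          fun x hx h => hRd x hx (h.elim .inl (.inr ∘ .inr))
    rcases hd with hdP | hdQ | hdB'
    · exact hasTwoFan_of_path_to_fan_path hav hb₁ hb₂ hb hP hQ hPB hQB hPQ ha haQ hdP hdB hdv
        hR hRd
    · exact hasTwoFan_of_path_to_fan_path hav hb₂ hb₁ hb.symm hQ hP hQB hPB hQP ha haP hdQ hdB
        hdv hR fun x hx h => hRd x hx (by tauto)
    · exact absurd hdB' hdB

end

section

variable {G : SimpleGraph V} {a b : V}

lemma exists_disjoint_paths_linking_cycles (h2 : TwoConnected G) (h3 : Subcubic G)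
    {c₁ : G.Walk a a} {c₂ : G.Walk b b} (hc₁ : c₁.IsCycle) (hc₂ : c₂.IsCycle)
    (hdisj : c₁.support.Disjoint c₂.support) :
    ∃ (p₁ q₁ p₂ q₂ : V) (P : G.Walk p₁ p₂) (Q : G.Walk q₁ q₂),
      p₁ ∈ c₁.support ∧ q₁ ∈ c₁.support ∧ p₁ ≠ q₁ ∧
      p₂ ∈ c₂.support ∧ q₂ ∈ c₂.support ∧ p₂ ≠ q₂ ∧
      P.IsPath ∧ Q.IsPath ∧ P.support.Disjoint Q.support ∧
      (∀ x ∈ P.support, x ∈ c₁.support → x = p₁) ∧ (∀ x ∈ Q.support, x ∈ c₁.support → x = q₁) ∧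
      (∀ x ∈ P.support, x ∈ c₂.support → x = p₂) ∧ (∀ x ∈ Q.support, x ∈ c₂.support → x = q₂) := by
  have := h2.finite
  obtain ⟨w⟩ := h2.connected.preconnected a b
  have hB : {x | x ∈ c₂.support}.Nontrivial :=
    ⟨b, c₂.start_mem_support, _, c₂.getVert_mem_support 1, (c₂.adj_snd hc₂.not_nil).ne⟩
  obtain ⟨p₂, q₂, P₀, Q₀, hp₂, hq₂, hpq₂, -, -, hP₀c₂, hQ₀c₂, hPQ₀⟩ :=
    hasTwoFan_of_walk h2.2 hB w c₂.start_mem_support (hdisj c₁.start_mem_support)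
  obtain ⟨p₁, hp₁, P, hP, hPP₀, hPc₁⟩ :=
    exists_isPath_from_last_mem {x | x ∈ c₁.support} P₀ c₁.start_mem_support
  obtain ⟨q₁, hq₁, Q, hQ, hQQ₀, hQc₁⟩ :=
    exists_isPath_from_last_mem {x | x ∈ c₁.support} Q₀ c₁.start_mem_support
  have hPQ : ∀ x ∈ P.support, x ∈ Q.support → x = a :=
    fun x hxP hxQ => hPQ₀ x (hPP₀ hxP) (hQQ₀ hxQ)
  have hpq₁ : p₁ ≠ q₁ := by
    rintro rfl
    obtain rfl : p₁ = a := hPQ p₁ P.start_mem_support Q.start_mem_support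
    have hPn : ¬ P.Nil := not_nil_of_ne fun h => hdisj hp₁ (h ▸ hp₂)
    have hQn : ¬ Q.Nil := not_nil_of_ne fun h => hdisj hp₁ (h ▸ hq₂)
    have hsnd := h3.eq_of_adj_of_notMem_support hc₁ (P.adj_snd hPn) (Q.adj_snd hQn)
      (fun h => (P.adj_snd hPn).ne (hPc₁ _ (P.getVert_mem_support 1) h).symm)
      (fun h => (Q.adj_snd hQn).ne (hQc₁ _ (Q.getVert_mem_support 1) h).symm)
    exact (P.adj_snd hPn).ne
      (hPQ _ (P.getVert_mem_support 1) (by simp [hsnd])).symm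
  refine ⟨p₁, q₁, p₂, q₂, P, Q, hp₁, hq₁, hpq₁, hp₂, hq₂, hpq₂, hP, hQ, ?_, hPc₁, hQc₁,
    fun x hx => hP₀c₂ x (hPP₀ hx), fun x hx => hQ₀c₂ x (hQQ₀ hx)⟩
  intro x hxP hxQ
  obtain rfl := hPQ x hxP hxQ
  exact hpq₁ ((hPc₁ x hxP c₁.start_mem_support).symm.trans (hQc₁ x hxQ c₁.start_mem_support))

lemma exists_odd_path_through_odd_cycle {c : G.Walk b b} (hc : c.IsCycle) (ho : Odd c.length)
    {p₁ p₂ q₁ q₂ : V} {P : G.Walk p₁ p₂} {Q : G.Walk q₁ q₂} (hP : P.IsPath) (hQ : Q.IsPath)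
    (hp₂ : p₂ ∈ c.support) (hq₂ : q₂ ∈ c.support) (hpq : p₂ ≠ q₂)
    (hPQ : P.support.Disjoint Q.support) (hPc : ∀ x ∈ P.support, x ∈ c.support → x = p₂)
    (hQc : ∀ x ∈ Q.support, x ∈ c.support → x = q₂) :
    ∃ W : G.Walk p₁ q₁, W.IsPath ∧ Odd W.length ∧
      ∀ e ∈ W.edges, e ∈ P.edges ∨ e ∈ c.edges ∨ e ∈ Q.edges := by
  obtain ⟨M, -, hM, -, hModd, -, hMc, hMe, -, -⟩ :=
    hc.exists_arcs_of_odd ho hp₂ hq₂ hpq (P.length + Q.length)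
  have hMQ : (M.append Q.reverse).IsPath :=
    hM.append hQ.reverse fun x hxM hxQ => hQc x (by simpa using hxQ) (hMc hxM)
  refine ⟨P.append (M.append Q.reverse), hP.append hMQ fun x hxP hx => ?_, ?_, ?_⟩
  · rcases (mem_support_append_iff _ _).mp hx with hxM | hxQ
    · exact hPc x hxP (hMc hxM)
    · exact absurd (by simpa using hxQ) (hPQ hxP)
  · simpa [length_append, Nat.add_right_comm, Nat.add_assoc] using hModd
  · intro e he
    simp only [edges_append, edges_reverse, List.mem_append, List.mem_reverse] at he
    rcases he with he | he | he
    exacts [.inl he, .inr (.inl (hMe he)), .inr (.inr he)]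

lemma hasSkewedTheta_of_odd_path_between_cycle_vertices {c : G.Walk a a} (hc : c.IsCycle)
    (ho : Odd c.length) {u v : V} (hu : u ∈ c.support) (hv : v ∈ c.support) (huv : u ≠ v)
    {W : G.Walk u v} (hW : W.IsPath) (hWodd : Odd W.length) (hWc : W.edges.Disjoint c.edges) :
    HasSkewedTheta G := by
  obtain ⟨P, Q, hP, hQ, hPodd, hQeven, -, hPc, hQc, hPQ⟩ := hc.exists_arcs_of_odd ho hu hv huv 0
  rw [zero_add] at hPodd hQeven
  exact ⟨u, v, P, W, Q, hP, hW, hQ, fun e hP hW => hWc hW (hPc hP), fun e hP hQ => hPQ hP hQ,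
    fun e hW hQ => hWc hW (hQc hQ), hPodd, hWodd, hQeven⟩

end

theorem stmt_0_general {V : Type u} (G : SimpleGraph V)
    (h2 : TwoConnected G) (h3 : Subcubic G)
    (a b : V) (c₁ : G.Walk a a) (c₂ : G.Walk b b)
    (hc₁ : c₁.IsCycle) (hc₂ : c₂.IsCycle)
    (ho₁ : Odd c₁.length) (ho₂ : Odd c₂.length)
    (hdisj : WalkEdgeDisjoint c₁ c₂) :
    HasSkewedTheta G := by
  have := h2.finite
  have hdisj' : c₁.edges.Disjoint c₂.edges := fun e h₁ h₂ => hdisj e h₁ h₂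
  obtain ⟨p₁, q₁, p₂, q₂, P, Q, hp₁, hq₁, hpq₁, hp₂, hq₂, hpq₂, hP, hQ, hPQ, hPc₁, hQc₁, hPc₂,
    hQc₂⟩ := exists_disjoint_paths_linking_cycles h2 h3 hc₁ hc₂
      (h3.disjoint_support_of_disjoint_edges hc₁ hc₂ hdisj')
  obtain ⟨W, hW, hWodd, hWe⟩ :=
    exists_odd_path_through_odd_cycle hc₂ ho₂ hP hQ hp₂ hq₂ hpq₂ hPQ hPc₂ hQc₂
  refine hasSkewedTheta_of_odd_path_between_cycle_vertices hc₁ ho₁ hp₁ hq₁ hpq₁ hW hWodd ?_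
  intro e heW hec₁
  rcases hWe e heW with he | he | he
  · exact disjoint_edges_of_forall_mem_support_eq p₁ hPc₁ he hec₁
  · exact hdisj' hec₁ he
  · exact disjoint_edges_of_forall_mem_support_eq q₁ hQc₁ he hec₁

/-- A 2-connected subcubic graph that contains two edge-disjoint odd cycles
contains a skewed theta. -/
theorem stmt_0 {V : Type u} [Fintype V] (G : SimpleGraph V)
    (h2 : TwoConnected G) (h3 : Subcubic G)
    (a b : V) (c₁ : G.Walk a a) (c₂ : G.Walk b b)
    (hc₁ : c₁.IsCycle) (hc₂ : c₂.IsCycle)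
    (ho₁ : Odd c₁.length) (ho₂ : Odd c₂.length)
    (hdisj : WalkEdgeDisjoint c₁ c₂) :
    HasSkewedTheta G :=
  stmt_0_general G h2 h3 a b c₁ c₂ hc₁ hc₂ ho₁ ho₂ hdisj
end

section
/- Let G be a graph with a bipartition P = (A,B) of its vertex set, and let F = E(X,Y) be an edge cut of G separating X from Y = V(G)\X. Define P' = (A △ X, B △ X) (symmetric differences). Then every P-odd edge in F becomes P'-even, every P-even edge in F becomes P'-odd, and every edge outside F keeps its parity status. In particular, if F contains more P-odd edges than P-even edges, then the number of P'-odd edges of G is strictly smaller than the number of P-odd edges. -/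
open SimpleGraph

attribute [local instance] Classical.propDecidable

universe u

variable {V : Type u}

/-! Replacing `A` by `A ∆ X` toggles membership in the first class exactly on `X`, so the two
ends of an edge change their relative position iff exactly one of them lies in `X`, i.e. iff the
edge is in the cut. After the flip the odd edges are thus the even cut edges together with the
odd edges outside the cut, while before it they were the odd cut edges together with the same
odd edges outside the cut. -/

def InCut (X : Set V) (e : Sym2 V) : Prop := (∃ a ∈ e, a ∈ X) ∧ (∃ b ∈ e, b ∉ X)

lemma pOdd_mk (A : Set V) (x y : V) : POdd A s(x, y) ↔ (x ∈ A ↔ y ∈ A) := by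
  simp only [POdd, Sym2.mem_iff, forall_eq_or_imp, forall_eq]
  tauto

lemma inCut_mk (X : Set V) (x y : V) : InCut X s(x, y) ↔ ¬(x ∈ X ↔ y ∈ X) := by
  simp only [InCut, Sym2.mem_iff, exists_eq_or_imp, exists_eq_left]
  tauto

lemma pOdd_symmDiff_iff (A X : Set V) (e : Sym2 V) :
    POdd (symmDiff A X) e ↔ Xor (InCut X e) (POdd A e) := by
  induction e using Sym2.ind with
  | _ x y =>
    rw [pOdd_mk, pOdd_mk, inCut_mk, Set.mem_symmDiff, Set.mem_symmDiff, xor_def]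
    tauto

lemma pOdd_symmDiff_iff_not_of_inCut {A X : Set V} {e : Sym2 V} (h : InCut X e) :
    POdd (symmDiff A X) e ↔ ¬POdd A e := by
  simp [pOdd_symmDiff_iff, h]

lemma pOdd_symmDiff_iff_of_not_inCut {A X : Set V} {e : Sym2 V} (h : ¬InCut X e) :
    POdd (symmDiff A X) e ↔ POdd A e := by
  simp [pOdd_symmDiff_iff, h]

lemma Set.ncard_sep_eq_add {α : Type*} {s : Set α} (hs : s.Finite) (c q : α → Prop) :
    {e ∈ s | q e}.ncard = {e ∈ s | c e ∧ q e}.ncard + {e ∈ s | ¬c e ∧ q e}.ncard := by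
  rw [← Set.ncard_union_eq _ (hs.subset fun _ h => h.1) (hs.subset fun _ h => h.1)]
  · congr 1
    ext e
    simp only [Set.mem_ofPred_eq, Set.mem_union]
    tauto
  · rw [Set.disjoint_left]
    exact fun _ hc hnc => hnc.2.1 hc.2.1

lemma Set.ncard_sep_xor_lt {α : Type*} {s : Set α} (hs : s.Finite) {p c : α → Prop}
    (h : {e ∈ s | c e ∧ ¬p e}.ncard < {e ∈ s | c e ∧ p e}.ncard) :
    {e ∈ s | Xor (c e) (p e)}.ncard < {e ∈ s | p e}.ncard := by
  have hin : {e ∈ s | c e ∧ Xor (c e) (p e)} = {e ∈ s | c e ∧ ¬p e} := by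
    ext e
    simp only [Set.mem_ofPred_eq, xor_def]
    tauto
  have hout : {e ∈ s | ¬c e ∧ Xor (c e) (p e)} = {e ∈ s | ¬c e ∧ p e} := by
    ext e
    simp only [Set.mem_ofPred_eq, xor_def]
    tauto
  rw [Set.ncard_sep_eq_add hs c, Set.ncard_sep_eq_add hs c p, hin, hout]
  omega

theorem stmt_3_general {V : Type u} [Fintype V] (G : SimpleGraph V)
    (A : Set V) (X : Set V) :
    (∀ e ∈ G.edgeSet, ((∃ a ∈ e, a ∈ X) ∧ (∃ b ∈ e, b ∉ X)) →
        (POdd A e ↔ ¬ POdd (symmDiff A X) e)) ∧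
    (∀ e ∈ G.edgeSet, ((∃ a ∈ e, a ∈ X) ∧ (∃ b ∈ e, b ∉ X)) →
        (¬ POdd A e ↔ POdd (symmDiff A X) e)) ∧
    (∀ e ∈ G.edgeSet, ¬ ((∃ a ∈ e, a ∈ X) ∧ (∃ b ∈ e, b ∉ X)) →
        (POdd A e ↔ POdd (symmDiff A X) e)) ∧
    ({e ∈ G.edgeSet | ((∃ a ∈ e, a ∈ X) ∧ (∃ b ∈ e, b ∉ X)) ∧ ¬ POdd A e}.ncard <
        {e ∈ G.edgeSet | ((∃ a ∈ e, a ∈ X) ∧ (∃ b ∈ e, b ∉ X)) ∧ POdd A e}.ncard →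
      {e ∈ G.edgeSet | POdd (symmDiff A X) e}.ncard <
        {e ∈ G.edgeSet | POdd A e}.ncard) := by
  refine ⟨fun e _ hc => ?_, fun e _ hc => (pOdd_symmDiff_iff_not_of_inCut hc).symm,
    fun e _ hc => (pOdd_symmDiff_iff_of_not_inCut hc).symm, fun hlt => ?_⟩
  · rw [pOdd_symmDiff_iff_not_of_inCut hc, not_not]
  · simp only [pOdd_symmDiff_iff]
    exact Set.ncard_sep_xor_lt G.edgeSet.toFinite hlt

/-- Flipping a bipartition along an edge cut `F = E(X, V \ X)`:
edges of the cut switch parity, edges outside keep it; in particular if the cut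
has more P-odd than P-even edges, the total number of odd edges strictly drops. -/
theorem stmt_3 {V : Type u} [Fintype V] (G : SimpleGraph V)
    (A B : Set V) (hd : Disjoint A B) (hu : A ∪ B = Set.univ) (X : Set V) :
    (∀ e ∈ G.edgeSet, ((∃ a ∈ e, a ∈ X) ∧ (∃ b ∈ e, b ∉ X)) →
        (POdd A e ↔ ¬ POdd (symmDiff A X) e)) ∧
    (∀ e ∈ G.edgeSet, ((∃ a ∈ e, a ∈ X) ∧ (∃ b ∈ e, b ∉ X)) →
        (¬ POdd A e ↔ POdd (symmDiff A X) e)) ∧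
    (∀ e ∈ G.edgeSet, ¬ ((∃ a ∈ e, a ∈ X) ∧ (∃ b ∈ e, b ∉ X)) →
        (POdd A e ↔ POdd (symmDiff A X) e)) ∧
    ({e ∈ G.edgeSet | ((∃ a ∈ e, a ∈ X) ∧ (∃ b ∈ e, b ∉ X)) ∧ ¬ POdd A e}.ncard <
        {e ∈ G.edgeSet | ((∃ a ∈ e, a ∈ X) ∧ (∃ b ∈ e, b ∉ X)) ∧ POdd A e}.ncard →
      {e ∈ G.edgeSet | POdd (symmDiff A X) e}.ncard <
        {e ∈ G.edgeSet | POdd A e}.ncard) :=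
  stmt_3_general G A X
end

section
/- Every t-minor of a claw-free graph is claw-free. -/
open SimpleGraph

attribute [local instance] Classical.propDecidable

universe u

variable {V : Type u}

/-!
A claw in a t-contraction `tContract G v` lifts to a claw of `G`. Call a common neighbour of `v`
and a vertex `w` a bridge to `w`. At a centre `u ≠ v` the only leaf that need not be a neighbour
of `u` in `G` is `v` itself, and it is replaced by a bridge to `u`. At the centre `v` every leaf is
replaced by a bridge to it; the bridges lie in the stable set `N(v)`, so they form a claw at `v`,
unless two leaves share a bridge `n`, and then `n` is the centre of a claw with leaves `v` and
those two leaves. Vertex deletions and isomorphisms are induced embeddings, which reflect claws.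
-/

section Claw

variable {α β : Type*} {G : SimpleGraph α} {H : SimpleGraph β}

theorem HasInducedClawAt.map {u : β} {c : α} (f : β → α)
    (hadj : ∀ x, H.Adj u x → G.Adj c (f x))
    (hstable : ∀ x y, H.Adj u x → H.Adj u y → x ≠ y → ¬ H.Adj x y →
      f x ≠ f y ∧ ¬ G.Adj (f x) (f y))
    (h : HasInducedClawAt H u) : HasInducedClawAt G c := by
  obtain ⟨a, b, d, hua, hub, hud, hab, had, hbd, nab, nad, nbd⟩ := h
  obtain ⟨hab', nab'⟩ := hstable a b hua hub hab nab
  obtain ⟨had', nad'⟩ := hstable a d hua hud had nad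
  obtain ⟨hbd', nbd'⟩ := hstable b d hub hud hbd nbd
  exact ⟨f a, f b, f d, hadj a hua, hadj b hub, hadj d hud, hab', had', hbd', nab', nad', nbd'⟩

theorem ClawFree.comap (f : H ↪g G) (h : ClawFree G) : ClawFree H := fun u hu =>
  h (f u) <| hu.map f (fun _ => f.map_adj_iff.2) fun _ _ _ _ hxy hn =>
    ⟨f.injective.ne hxy, by rwa [f.map_adj_iff]⟩

end Claw

section TContract

variable {W : Type u} {G : SimpleGraph W} {v : W} {x y : {w : W // w ∉ G.neighborSet v}}

theorem tContract_adj :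
    (tContract G v).Adj x y ↔ x ≠ y ∧
      (G.Adj x y ∨ ((x : W) = v ∧ ∃ n, G.Adj v n ∧ G.Adj n y) ∨
        ((y : W) = v ∧ ∃ n, G.Adj v n ∧ G.Adj n x)) := by
  simp only [tContract, fromRel_adj, G.adj_comm (y : W)]
  grind

theorem tContract_adj_of_ne (hx : (x : W) ≠ v) (hy : (y : W) ≠ v) :
    (tContract G v).Adj x y ↔ G.Adj x y := by
  rw [tContract_adj]
  exact ⟨fun ⟨_, h⟩ => by simpa [hx, hy] using h,
    fun h => ⟨fun hxy => G.ne_of_adj h (congrArg Subtype.val hxy), .inl h⟩⟩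

theorem tContract_adj_of_eq (hx : (x : W) = v) (hy : (y : W) ≠ v) :
    (tContract G v).Adj x y ↔ ∃ n, G.Adj v n ∧ G.Adj n y := by
  rw [tContract_adj]
  refine ⟨fun ⟨_, h⟩ => ?_,
    fun h => ⟨fun hxy => by subst hxy; exact hy hx, .inr (.inl ⟨hx, h⟩)⟩⟩
  rcases h with h | ⟨-, h⟩ | ⟨h, -⟩
  exacts [(y.2 (by rwa [hx] at h)).elim, h, absurd h hy]

theorem ne_of_tContract_adj (h : (tContract G v).Adj x y) (hx : (x : W) = v) : (y : W) ≠ v :=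
  fun hy => (tContract G v).ne_of_adj h (Subtype.ext (hx.trans hy.symm))

noncomputable def tContractBridge (G : SimpleGraph W) (v w : W) : W :=
  if h : ∃ n, G.Adj v n ∧ G.Adj n w then h.choose else v

theorem tContractBridge_spec {w : W} (h : ∃ n, G.Adj v n ∧ G.Adj n w) :
    G.Adj v (tContractBridge G v w) ∧ G.Adj (tContractBridge G v w) w := by
  rw [tContractBridge, dif_pos h]
  exact h.choose_spec

theorem not_hasInducedClawAt_tContract_self (hcf : ClawFree G)
    (hst : StableSet G (G.neighborSet v)) {u : {w : W // w ∉ G.neighborSet v}}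
    (hu : (u : W) = v) :
    ¬ HasInducedClawAt (tContract G v) u := by
  intro h
  refine hcf v (h.map (fun x : {w // w ∉ G.neighborSet v} => tContractBridge G v x)
    (fun x hx => ?_) ?_)
  · exact (tContractBridge_spec ((tContract_adj_of_eq hu (ne_of_tContract_adj hx hu)).1 hx)).1
  intro x y hx hy hxy nxy
  have hxv := ne_of_tContract_adj hx hu
  have hyv := ne_of_tContract_adj hy hu
  obtain ⟨hvnx, hnx⟩ := tContractBridge_spec ((tContract_adj_of_eq hu hxv).1 hx)
  obtain ⟨hvny, hny⟩ := tContractBridge_spec ((tContract_adj_of_eq hu hyv).1 hy)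
  have hne : tContractBridge G v x ≠ tContractBridge G v y := by
    intro heq
    rw [← heq] at hny
    exact hcf _ ⟨v, x, y, hvnx.symm, hnx, hny, hxv.symm, hyv.symm,
      fun h => hxy (Subtype.ext h), x.2, y.2, fun h => nxy ((tContract_adj_of_ne hxv hyv).2 h)⟩
  exact ⟨hne, hst hvnx hvny hne⟩

theorem not_hasInducedClawAt_tContract_of_ne (hcf : ClawFree G)
    {u : {w : W // w ∉ G.neighborSet v}} (hu : (u : W) ≠ v) :
    ¬ HasInducedClawAt (tContract G v) u := by
  let f : {w : W // w ∉ G.neighborSet v} → W := fun x =>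
    if (x : W) = v then tContractBridge G v u else x
  have hleaf_v : ∀ x y, (tContract G v).Adj u x → x ≠ y → ¬ (tContract G v).Adj x y →
      (x : W) = v → (y : W) ≠ v → f x ≠ f y ∧ ¬ G.Adj (f x) (f y) := by
    intro x y hx hxy nxy hxv hyv
    obtain ⟨hvn, -⟩ := tContractBridge_spec ((tContract_adj_of_eq hxv hu).1 hx.symm)
    simp only [f, hxv, hyv, if_true, if_false]
    exact ⟨fun h => y.2 (h ▸ hvn),
      fun h => nxy ((tContract_adj_of_eq hxv hyv).2 ⟨_, hvn, h⟩)⟩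
  intro h
  refine hcf u (h.map f (fun x hx => ?_) fun x y hx hy hxy nxy => ?_)
  · by_cases hxv : (x : W) = v
    · simp only [f, hxv, if_true]
      exact (tContractBridge_spec ((tContract_adj_of_eq hxv hu).1 hx.symm)).2.symm
    · simpa [f, hxv] using (tContract_adj_of_ne hu hxv).1 hx
  by_cases hxv : (x : W) = v
  · exact hleaf_v x y hx hxy nxy hxv fun hyv => hxy (Subtype.ext (hxv.trans hyv.symm))
  by_cases hyv : (y : W) = v
  · obtain ⟨hne, nadj⟩ := hleaf_v y x hy hxy.symm (fun h => nxy h.symm) hyv hxv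
    exact ⟨hne.symm, fun h => nadj h.symm⟩
  simp only [f, hxv, hyv, if_false]
  exact ⟨fun h => hxy (Subtype.ext h), fun h => nxy ((tContract_adj_of_ne hxv hyv).2 h)⟩

theorem ClawFree.tContract (hcf : ClawFree G) (hst : StableSet G (G.neighborSet v)) :
    ClawFree (tContract G v) := fun u => by
  by_cases hu : (u : W) = v
  · exact not_hasInducedClawAt_tContract_self hcf hst hu
  · exact not_hasInducedClawAt_tContract_of_ne hcf hu

end TContract

theorem ClawFree.of_tStep {W W' : Type u} {G : SimpleGraph W} {H : SimpleGraph W'}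
    (hcf : ClawFree G) (h : TStep G H) : ClawFree H := by
  rcases h with ⟨v, ⟨e⟩⟩ | ⟨v, hst, ⟨e⟩⟩
  · exact (hcf.comap (Embedding.induce _)).comap e.toEmbedding
  · exact (hcf.tContract hst).comap e.toEmbedding

/-- every t-minor of a claw-free graph is claw-free. -/
theorem stmt_8 {W W' : Type u} (G : SimpleGraph W) (H : SimpleGraph W')
    (hcf : ClawFree G) (hm : IsTMinor G H) : ClawFree H :=
  Relation.ReflTransGen.rec (motive := fun X _ => ClawFree X.2) hcf
    (fun _ hstep ih => ih.of_tStep hstep) hm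
end

section
/- A t-perfect claw-free graph has maximum degree at most 4. More precisely: if a claw-free graph contains a vertex of degree at least 5, then it contains K_4 or the 5-wheel W_5 as an induced subgraph, and hence is not t-perfect. -/
open SimpleGraph

attribute [local instance] Classical.propDecidable

universe u

variable {V : Type u}

/-!
Five neighbours of a vertex `v` of a claw-free graph contain no stable triple. If they span a
triangle, `v` completes it to `K4`; otherwise they form the unique graph on five vertices without
triangles and stable triples, the 5-cycle, and `v` completes it to `W5`. Neither graph is
t-perfect: the constant vector `1/3` satisfies all edge and odd-cycle inequalities, but violates
`x(K4) ≤ 1`, resp. `x(rim) + 2 x(hub) ≤ 2`, which every stable set satisfies.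
-/

open Finset

instance : DecidableRel K4.Adj := fun _ _ => decidable_of_iff' _ (SimpleGraph.top_adj _ _)

instance : DecidableRel W5.Adj := fun _ _ => decidable_of_iff' _ (SimpleGraph.fromRel_adj _ _ _)

instance : DecidableRel C5.Adj := fun _ _ => decidable_of_iff' _ (SimpleGraph.fromRel_adj _ _ _)

section TPerfection

lemma const_third_mem_TSTAB [Fintype V] (G : SimpleGraph V) :
    (fun _ => (1 / 3 : ℝ)) ∈ TSTAB G := by
  refine ⟨fun _ => by norm_num, fun _ _ _ => by norm_num, fun v c hc hodd => ?_⟩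
  have hcard : #c.support.toFinset ≤ c.length := calc
    #c.support.toFinset = #c.support.tail.toFinset := by
      conv_lhs => rw [← c.cons_tail_support]
      rw [List.toFinset_cons,
        insert_eq_of_mem (List.mem_toFinset.2 (Walk.end_mem_tail_support hc.not_nil))]
    _ ≤ c.support.tail.length := List.toFinset_card_le _
    _ = c.length := by simp
  have h3 := hc.three_le_length
  obtain ⟨m, hm⟩ := hodd
  have hcard' : (#c.support.toFinset : ℝ) ≤ 3 * m := by exact_mod_cast (by omega)
  rw [sum_const, nsmul_eq_mul, show c.length / 2 = m by omega]
  linarith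

variable {W : Type*} {G : SimpleGraph V}

lemma weight_le_of_mem_stableSetPolytope [Fintype W] {H : SimpleGraph W} (e : H ↪g G)
    (c : W → ℕ) (B : ℕ)
    (hB : ∀ s : Finset W, (∀ i ∈ s, ∀ j ∈ s, ¬ H.Adj i j) → ∑ i ∈ s, c i ≤ B)
    {x : V → ℝ} (hx : x ∈ stableSetPolytope G) : ∑ i, (c i : ℝ) * x (e i) ≤ B := by
  have hlin : IsLinearMap ℝ fun y : V → ℝ => ∑ i, (c i : ℝ) * y (e i) :=
    ⟨fun y z => by simp only [Pi.add_apply, mul_add, sum_add_distrib],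
      fun t y => by simp only [Pi.smul_apply, smul_eq_mul, mul_sum, mul_left_comm]⟩
  refine convexHull_min ?_ (convex_halfSpace_le hlin (B : ℝ)) hx
  rintro _ ⟨s, hs, rfl⟩
  have hstable : ∀ i ∈ univ.filter (e · ∈ s), ∀ j ∈ univ.filter (e · ∈ s), ¬ H.Adj i j := by
    intro i hi j hj hij
    simp only [mem_filter, mem_univ, true_and] at hi hj
    exact hs hi hj (e.injective.ne hij.ne) (e.map_adj_iff.2 hij)
  have hsum : ∑ i, (c i : ℝ) * s.indicator 1 (e i) = ∑ i ∈ univ.filter (e · ∈ s), (c i : ℝ) := by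
    rw [sum_filter]
    refine sum_congr rfl fun i _ => ?_
    by_cases hi : e i ∈ s <;> simp [hi]
  simp only [Set.mem_ofPred_eq, hsum]
  exact_mod_cast hB _ hstable

/-- The constant vector `1/3` lies in `TSTAB G` but violates the weighted inequality. -/
lemma not_tPerfect_of_embedding [Fintype V] [Fintype W] {H : SimpleGraph W} (e : H ↪g G)
    (c : W → ℕ) (B : ℕ)
    (hB : ∀ s : Finset W, (∀ i ∈ s, ∀ j ∈ s, ¬ H.Adj i j) → ∑ i ∈ s, c i ≤ B)
    (hc : 3 * B < ∑ i, c i) : ¬ TPerfect G := by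
  intro hG
  have hx : (fun _ => (1 / 3 : ℝ)) ∈ stableSetPolytope G := hG ▸ const_third_mem_TSTAB G
  have hle := weight_le_of_mem_stableSetPolytope e c B hB hx
  rw [← sum_mul] at hle
  have hc' : 3 * (B : ℝ) < ∑ i, (c i : ℝ) := by exact_mod_cast hc
  linarith

lemma not_tPerfect_of_K4_embedding [Fintype V] (e : K4 ↪g G) : ¬ TPerfect G :=
  not_tPerfect_of_embedding e (fun _ => 1) 1 (by decide) (by decide)

lemma not_tPerfect_of_W5_embedding [Fintype V] (e : W5 ↪g G) : ¬ TPerfect G :=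
  not_tPerfect_of_embedding e ![1, 1, 1, 1, 1, 2] 2 (by decide) (by decide)

end TPerfection

namespace SimpleGraph

variable {W : Type*} {G : SimpleGraph V}

section Embeddings

def Embedding.ofAdjIff {H : SimpleGraph W} (hH : ∀ i j, (∀ k, H.Adj i k ↔ H.Adj j k) → i = j)
    (f : W → V) (hf : ∀ i j, G.Adj (f i) (f j) ↔ H.Adj i j) : H ↪g G where
  toFun := f
  inj' i j hij := hH i j fun k => by rw [← hf, ← hf, hij]
  map_rel_iff' := hf _ _

lemma C5_adj_add_iff (i k : Fin 5) : C5.Adj i (i + k) ↔ k = 1 ∨ k = 4 := by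
  revert i k
  decide

lemma adj_iff_C5_adj {x : Fin 5 → V} (hadj : ∀ i, G.Adj (x i) (x (i + 1)))
    (hnadj : ∀ i, ¬ G.Adj (x i) (x (i + 2))) (i j : Fin 5) :
    G.Adj (x i) (x j) ↔ C5.Adj i j := by
  obtain ⟨k, rfl⟩ : ∃ k, j = i + k := ⟨j - i, (add_sub_cancel i j).symm⟩
  have h3 : i + 3 + 2 = i := by revert i; decide
  have h4 : i + 4 + 1 = i := by revert i; decide
  rw [C5_adj_add_iff]
  fin_cases k
  · simp
  · simpa using hadj i
  · simpa using hnadj i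
  · simpa [G.adj_comm, h3] using hnadj (i + 3)
  · simpa [G.adj_comm, h4] using hadj (i + 4)

def w5Embedding (v : V) (x : Fin 5 → V) (hv : ∀ i, G.Adj (x i) v)
    (hx : ∀ i j, G.Adj (x i) (x j) ↔ C5.Adj i j) : W5 ↪g G :=
  Embedding.ofAdjIff (by decide) (Fin.snoc (α := fun _ => V) x v) fun i j => by
    have hrim : ∀ i j : Fin 5, W5.Adj i.castSucc j.castSucc ↔ C5.Adj i j := by decide
    have hspoke : ∀ i : Fin 5, W5.Adj i.castSucc (Fin.last 5) := by decide
    induction i using Fin.lastCases <;> induction j using Fin.lastCases <;>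
      simp only [Fin.snoc_castSucc, Fin.snoc_last, hx, hrim, hv, hspoke, G.adj_comm v,
        W5.adj_comm (Fin.last 5), G.irrefl, W5.irrefl]

end Embeddings

section FiveVertices

variable {s : Set V} {a b c d e : V}

lemma CliqueFreeOn.not_adj_of_adj (h : G.CliqueFreeOn s 3) (ha : a ∈ s) (hb : b ∈ s)
    (hc : c ∈ s) (hab : G.Adj a b) (hac : G.Adj a c) : ¬ G.Adj b c := fun hbc =>
  h (by simp [Set.insert_subset_iff, ha, hb, hc]) (is3Clique_triple_iff.2 ⟨hab, hac, hbc⟩)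

lemma CliqueFreeOn.compl_adj_or_adj_or_adj (h : Gᶜ.CliqueFreeOn s 3) (ha : a ∈ s) (hb : b ∈ s)
    (hc : c ∈ s) (hab : a ≠ b) (hac : a ≠ c) (hbc : b ≠ c) :
    G.Adj a b ∨ G.Adj a c ∨ G.Adj b c := by
  by_contra! hn
  exact h.not_adj_of_adj ha hb hc ((compl_adj ..).2 ⟨hab, hn.1⟩) ((compl_adj ..).2 ⟨hac, hn.2.1⟩)
    ((compl_adj ..).2 ⟨hbc, hn.2.2⟩)

lemma card_filter_adj_le_two {S : Finset V} (h : G.CliqueFreeOn S 3) (hc : Gᶜ.CliqueFreeOn S 3)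
    (ha : a ∈ S) : #(S.filter (G.Adj a)) ≤ 2 := by
  by_contra! h3
  obtain ⟨b, c, d, hb, hc', hd, hbc, hbd, hcd⟩ := two_lt_card_iff.1 h3
  simp only [mem_filter] at hb hc' hd
  rcases hc.compl_adj_or_adj_or_adj hb.1 hc'.1 hd.1 hbc hbd hcd with hadj | hadj | hadj
  · exact h.not_adj_of_adj ha hb.1 hc'.1 hb.2 hc'.2 hadj
  · exact h.not_adj_of_adj ha hb.1 hd.1 hb.2 hd.2 hadj
  · exact h.not_adj_of_adj ha hc'.1 hd.1 hc'.2 hd.2 hadj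

lemma card_filter_adj_add_card_filter_compl_adj {S : Finset V} (ha : a ∈ S) :
    #(S.filter (G.Adj a)) + #(S.filter (Gᶜ.Adj a)) + 1 = #S := by
  have hadj : S.filter (G.Adj a) = (S.erase a).filter (G.Adj a) := by
    ext b
    simp only [mem_filter, mem_erase]
    exact ⟨fun hb => ⟨⟨hb.2.ne.symm, hb.1⟩, hb.2⟩, fun hb => ⟨hb.1.2, hb.2⟩⟩
  have hcompl : S.filter (Gᶜ.Adj a) = (S.erase a).filter (¬ G.Adj a ·) := by
    ext b
    simp only [mem_filter, mem_erase, compl_adj]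
    exact ⟨fun hb => ⟨⟨hb.2.1.symm, hb.1⟩, hb.2.2⟩, fun hb => ⟨hb.1.2, hb.1.1.symm, hb.2⟩⟩
  rw [hadj, hcompl, card_filter_add_card_filter_not, card_erase_add_one ha]

/-- Otherwise `z` sees both `c` and `d`, closing a triangle. -/
lemma adj_or_adj_of_not_adj (h : G.CliqueFreeOn s 3) (hc : Gᶜ.CliqueFreeOn s 3)
    {y z : V} (hy : y ∈ s) (hz : z ∈ s) (hc' : c ∈ s) (hd : d ∈ s) (hay : G.Adj a y)
    (haz : G.Adj a z) (hac : ¬ G.Adj a c) (had : ¬ G.Adj a d) (hyz : y ≠ z)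
    (hyz' : ¬ G.Adj y z) (hcd : G.Adj c d) : G.Adj y c ∨ G.Adj y d := by
  have hne : ∀ {u w}, G.Adj a u → ¬ G.Adj a w → u ≠ w := fun hu hw huw => hw (huw ▸ hu)
  by_contra! hn
  have hzc : G.Adj z c := by
    have := hc.compl_adj_or_adj_or_adj hy hz hc' hyz (hne hay hac) (hne haz hac)
    tauto
  have hzd : G.Adj z d := by
    have := hc.compl_adj_or_adj_or_adj hy hz hd hyz (hne hay had) (hne haz had)
    tauto
  exact h.not_adj_of_adj hz hc' hd hzc hzd hcd

lemma exists_C5_of_adj_of_not_adj (h : G.CliqueFreeOn s 3) (hc : Gᶜ.CliqueFreeOn s 3)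
    (ha : a ∈ s) (hb : b ∈ s) (hc' : c ∈ s) (hd : d ∈ s) (he : e ∈ s)
    (hab : G.Adj a b) (hae : G.Adj a e) (hbe : b ≠ e) (hac : ¬ G.Adj a c) (had : ¬ G.Adj a d)
    (hcd : G.Adj c d) (hbc : G.Adj b c) :
    ∃ x : Fin 5 → V, (∀ i, x i ∈ s) ∧ ∀ i j, G.Adj (x i) (x j) ↔ C5.Adj i j := by
  have hne : ∀ {u w}, G.Adj a u → ¬ G.Adj a w → u ≠ w := fun hu hw huw => hw (huw ▸ hu)
  have hbe' : ¬ G.Adj b e := h.not_adj_of_adj ha hb he hab hae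
  have hbd : ¬ G.Adj b d := h.not_adj_of_adj hc' hb hd hbc.symm hcd
  have hed : G.Adj e d := by
    refine (adj_or_adj_of_not_adj h hc he hb hc' hd hae hab hac had hbe.symm
      (fun heb => hbe' heb.symm) hcd).resolve_left fun hec => ?_
    have hde : ¬ G.Adj d e := h.not_adj_of_adj hc' hd he hcd hec.symm
    have := hc.compl_adj_or_adj_or_adj hb hd he (hne hab had) hbe (hne hae had).symm
    tauto
  have hec : ¬ G.Adj e c := h.not_adj_of_adj hd he hc' hed.symm hcd.symm
  refine ⟨![a, b, c, d, e], fun i => by fin_cases i <;> assumption, adj_iff_C5_adj ?_ ?_⟩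
  · intro i
    fin_cases i
    exacts [hab, hbc, hcd, hed.symm, hae.symm]
  · intro i
    fin_cases i
    exacts [hac, hbd, fun hce => hec hce.symm, fun hda => had hda.symm, fun heb => hbe' heb.symm]

/-- Every vertex has at most two neighbours and at most two non-neighbours in `S`, hence exactly
two of each; following them around closes a 5-cycle. -/
theorem exists_C5_of_cliqueFreeOn {S : Finset V} (hS : #S = 5) (h : G.CliqueFreeOn S 3)
    (hc : Gᶜ.CliqueFreeOn S 3) :
    ∃ x : Fin 5 → V, (∀ i, x i ∈ S) ∧ ∀ i j, G.Adj (x i) (x j) ↔ C5.Adj i j := by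
  obtain ⟨a, ha⟩ : S.Nonempty := card_pos.1 (by omega)
  have hsum := card_filter_adj_add_card_filter_compl_adj (G := G) ha
  have hG := card_filter_adj_le_two h hc ha
  have hGc : #(S.filter (Gᶜ.Adj a)) ≤ 2 := by
    convert card_filter_adj_le_two hc (by rwa [compl_compl]) ha
  obtain ⟨b, e, hbe, hN⟩ := card_eq_two.1 (show #(S.filter (G.Adj a)) = 2 by omega)
  obtain ⟨c, d, hcd, hNc⟩ := card_eq_two.1 (show #(S.filter (Gᶜ.Adj a)) = 2 by omega)
  obtain ⟨hb, hab⟩ := mem_filter.1 (hN ▸ mem_insert_self b {e})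
  obtain ⟨he, hae⟩ := mem_filter.1 (hN ▸ mem_insert_of_mem (mem_singleton_self e))
  obtain ⟨hc', hac⟩ := mem_filter.1 (hNc ▸ mem_insert_self c {d})
  obtain ⟨hd, had⟩ := mem_filter.1 (hNc ▸ mem_insert_of_mem (mem_singleton_self d))
  rw [compl_adj] at hac had
  have hcd' : G.Adj c d := by
    have := hc.compl_adj_or_adj_or_adj ha hc' hd hac.1 had.1 hcd
    tauto
  rcases adj_or_adj_of_not_adj h hc hb he hc' hd hab hae hac.2 had.2 hbe
    (h.not_adj_of_adj ha hb he hab hae) hcd' with hbc | hbd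
  · exact exists_C5_of_adj_of_not_adj h hc ha hb hc' hd he hab hae hbe hac.2 had.2 hcd' hbc
  · exact exists_C5_of_adj_of_not_adj h hc ha hb hd hc' he hab hae hbe had.2 hac.2 hcd'.symm hbd

end FiveVertices

end SimpleGraph

theorem ClawFree.compl_cliqueFreeOn_neighborSet {G : SimpleGraph V} (hcf : ClawFree G) (v : V) :
    Gᶜ.CliqueFreeOn (G.neighborSet v) 3 := by
  intro t ht hclaw
  obtain ⟨a, b, c, hab, hac, hbc, rfl⟩ := is3Clique_iff.1 hclaw
  simp only [Finset.coe_insert, Finset.coe_singleton, Set.insert_subset_iff,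
    Set.singleton_subset_iff, mem_neighborSet] at ht
  rw [compl_adj] at hab hac hbc
  exact hcf v ⟨a, b, c, ht.1, ht.2.1, ht.2.2, hab.1, hac.1, hbc.1, hab.2, hac.2, hbc.2⟩

theorem ClawFree.nonempty_K4_or_W5_embedding {G : SimpleGraph V} (hcf : ClawFree G) {v : V}
    (h5 : 5 ≤ (G.neighborSet v).ncard) : Nonempty (K4 ↪g G) ∨ Nonempty (W5 ↪g G) := by
  obtain ⟨t, htv, ht⟩ := Set.exists_subset_card_eq h5
  obtain ⟨S, rfl⟩ := (Set.finite_of_ncard_pos (ht ▸ by norm_num : 0 < t.ncard)).exists_finset_coe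
  rw [Set.ncard_coe_finset] at ht
  by_cases htri : G.CliqueFreeOn S 3
  · obtain ⟨x, hxS, hx⟩ :=
      exists_C5_of_cliqueFreeOn ht htri (.subset _ htv (hcf.compl_cliqueFreeOn_neighborSet v))
    exact Or.inr ⟨w5Embedding v x (fun i => (htv (hxS i)).symm) hx⟩
  · simp only [CliqueFreeOn, not_forall, not_not] at htri
    obtain ⟨t, htS, htri⟩ := htri
    exact Or.inl ⟨topEmbeddingOfNotCliqueFree fun h => h _ (htri.insert fun b hb => htv (htS hb))⟩

/-- a claw-free graph with a vertex of degree at least 5 contains `K₄` or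
the 5-wheel `W₅` as an induced subgraph, and hence is not t-perfect. -/
theorem stmt_9 {V : Type u} [Fintype V] (G : SimpleGraph V) (hcf : ClawFree G)
    (v : V) (h5 : 5 ≤ (G.neighborSet v).ncard) :
    (Nonempty (K4 ↪g G) ∨ Nonempty (W5 ↪g G)) ∧ ¬ TPerfect G := by
  have hemb := hcf.nonempty_K4_or_W5_embedding h5
  exact ⟨hemb, hemb.elim (·.elim not_tPerfect_of_K4_embedding)
    (·.elim not_tPerfect_of_W5_embedding)⟩
end

section
/- If a claw-free graph G contains a vertex v of degree at least 5 and G is K_4-free, then the neighbourhood of v contains an induced 5-cycle; hence G contains the 5-wheel W_5 as an induced subgraph. -/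
open SimpleGraph

attribute [local instance] Classical.propDecidable

universe u

variable {V : Type u}

/-! The neighbourhood of `v` induces a graph that is triangle-free (a triangle there plus `v`
is a `K₄`) and has no three independent vertices (they would be a claw at `v`). In such a graph
on at least five vertices every vertex `x` has at most two neighbours and at most two
non-neighbours, hence exactly two of each; the two non-neighbours `c, d` are adjacent, and each
is adjacent to exactly one of the two neighbours `a, b`, to different ones, which closes the
induced pentagon `x a c d b`. Adding `v` as a hub gives the induced `W₅`. -/

lemma C5_adj_iff (i j : Fin 5) : C5.Adj i j ↔ j = i + 1 ∨ i = j + 1 := by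
  simp only [C5, fromRel_adj, ne_eq, Fin.ext_iff, Fin.val_add]
  omega

lemma C5_adj_add_iff (i k : Fin 5) : C5.Adj i (i + k) ↔ k = 1 ∨ k = 4 := by
  rw [C5_adj_iff]
  revert i k
  decide

lemma W5_adj_castSucc_castSucc (i j : Fin 5) :
    W5.Adj i.castSucc j.castSucc ↔ C5.Adj i j := by
  simp only [W5, C5, fromRel_adj, ne_eq, Fin.ext_iff, Fin.val_castSucc]
  omega

lemma W5_adj_castSucc_last (i : Fin 5) : W5.Adj i.castSucc (Fin.last 5) := by
  simp only [W5, fromRel_adj, ne_eq, Fin.ext_iff, Fin.val_castSucc, Fin.val_last, true_or,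
    and_true]
  omega

namespace SimpleGraph

variable {α β : Type*} {G : SimpleGraph α} {H : SimpleGraph β}

lemma injective_of_forall_adj_iff {f : α → β} (hf : ∀ x y, H.Adj (f x) (f y) ↔ G.Adj x y)
    (hG : ∀ x y, (∀ z, G.Adj x z ↔ G.Adj y z) → x = y) : Function.Injective f :=
  fun x y hxy => hG x y fun z => by rw [← hf, ← hf, hxy]

lemma nonempty_C5_embedding_of_cycle (c : Fin 5 → β) (hadj : ∀ i, H.Adj (c i) (c (i + 1)))
    (hnadj : ∀ i, ¬ H.Adj (c i) (c (i + 2))) : Nonempty (C5 ↪g H) := by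
  have hc : ∀ i j, H.Adj (c i) (c j) ↔ C5.Adj i j := by
    intro i j
    obtain ⟨k, rfl⟩ : ∃ k, j = i + k := ⟨j - i, by abel⟩
    rw [C5_adj_add_iff]
    fin_cases k
    · simp
    · simpa using hadj i
    · simpa using hnadj i
    · have := hnadj (i + 3)
      simp only [add_assoc, Fin.reduceAdd, add_zero] at this
      simpa using fun h => this h.symm
    · have := hadj (i + 4)
      simp only [add_assoc, Fin.reduceAdd, add_zero] at this
      simpa using this.symm
  -- no two vertices of `C5` have the same neighbourhood
  have hinj : Function.Injective c := injective_of_forall_adj_iff hc (by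
    simp only [C5_adj_iff]
    decide)
  exact ⟨⟨⟨c, hinj⟩, hc _ _⟩⟩

lemma IsIndepSet.card_lt_of_indepSetFree {n : ℕ} {s : Finset α} (hs : G.IsIndepSet s)
    (h : G.IndepSetFree n) : s.card < n := by
  by_contra! hn
  obtain ⟨t, hts, ht⟩ := Finset.exists_subset_card_eq hn
  exact h t ⟨hs.mono (Finset.coe_subset.2 hts), ht⟩

lemma degree_lt_of_cliqueFree_three_of_indepSetFree {n : ℕ} (h3 : G.CliqueFree 3)
    (hn : G.IndepSetFree n) (x : α) [Fintype (G.neighborSet x)] : G.degree x < n := by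
  rw [← card_neighborFinset_eq_degree]
  refine IsIndepSet.card_lt_of_indepSetFree ?_ hn
  simpa using isIndepSet_neighborSet_of_triangleFree G h3 x

lemma nonempty_C5_embedding_of_adj_of_compl_adj (h3 : G.CliqueFree 3) (hi3 : G.IndepSetFree 3)
    {x a b c d : α} (ha : G.Adj x a) (hb : G.Adj x b) (hab : a ≠ b) (hc : Gᶜ.Adj x c)
    (hd : Gᶜ.Adj x d) (hcd : c ≠ d) : Nonempty (C5 ↪g G) := by
  have triangle {p q r : α} (hpq : G.Adj p q) (hpr : G.Adj p r) (hqr : G.Adj q r) : False :=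
    h3 {p, q, r} (is3Clique_triple_iff.2 ⟨hpq, hpr, hqr⟩)
  have cotriangle {p q r : α} (hpq : p ≠ q) (hpr : p ≠ r) (hqr : q ≠ r) :
      G.Adj p q ∨ G.Adj p r ∨ G.Adj q r := by
    by_contra! h
    refine G.cliqueFree_compl.2 hi3 {p, q, r} (is3Clique_triple_iff.2 ?_)
    simp only [compl_adj]
    exact ⟨⟨hpq, h.1⟩, ⟨hpr, h.2.1⟩, ⟨hqr, h.2.2⟩⟩
  rw [compl_adj] at hc hd
  have apart {y z : α} (hy : G.Adj x y) (hz : ¬ G.Adj x z) : y ≠ z := fun h => hz (h ▸ hy)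
  have hab' : ¬ G.Adj a b := fun h => triangle ha hb h
  wlog hac : G.Adj a c generalizing a b
  · have hbc : G.Adj b c :=
      ((cotriangle hab (apart ha hc.2) (apart hb hc.2)).resolve_left
        hab').resolve_left hac
    exact this hb ha hab.symm (fun h => hab' h.symm) hbc
  have hcd' : G.Adj c d := ((cotriangle hc.1 hd.1 hcd).resolve_left hc.2).resolve_left hd.2
  have hbd : G.Adj b d :=
    ((cotriangle hab (apart ha hd.2) (apart hb hd.2)).resolve_left
      hab').resolve_left fun had => triangle hac had hcd'
  refine nonempty_C5_embedding_of_cycle ![x, a, c, d, b] ?_ ?_ <;> intro i <;> fin_cases i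
  exacts [ha, hac, hcd', hbd.symm, hb.symm, hc.2, fun had => triangle hac had hcd',
    fun hcb => triangle hcb.symm hbd hcd', fun h => hd.2 h.symm, fun h => hab' h.symm]

lemma nonempty_C5_embedding_of_cliqueFree_of_indepSetFree [Finite α] (h3 : G.CliqueFree 3)
    (hi3 : G.IndepSetFree 3) (hcard : 5 ≤ Nat.card α) : Nonempty (C5 ↪g G) := by
  have := Fintype.ofFinite α
  obtain ⟨x⟩ : Nonempty α := (Nat.card_pos_iff.1 (by omega)).1
  have hdeg := G.degree_lt_of_cliqueFree_three_of_indepSetFree h3 hi3 x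
  have hdeg_compl := Gᶜ.degree_lt_of_cliqueFree_three_of_indepSetFree
    (G.cliqueFree_compl.2 hi3) (G.indepSetFree_compl.2 h3) x
  have hsum := G.degree_compl (v := x)
  rw [Nat.card_eq_fintype_card] at hcard
  obtain ⟨a, b, hab, hN⟩ := Finset.card_eq_two.1
    (show (G.neighborFinset x).card = 2 by rw [card_neighborFinset_eq_degree]; omega)
  obtain ⟨c, d, hcd, hM⟩ := Finset.card_eq_two.1
    (show (Gᶜ.neighborFinset x).card = 2 by rw [card_neighborFinset_eq_degree]; omega)
  simp only [Finset.ext_iff, mem_neighborFinset, Finset.mem_insert, Finset.mem_singleton] at hN hM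
  exact nonempty_C5_embedding_of_adj_of_compl_adj h3 hi3 ((hN a).2 (.inl rfl))
    ((hN b).2 (.inr rfl)) hab ((hM c).2 (.inl rfl)) ((hM d).2 (.inr rfl)) hcd

lemma CliqueFree.cliqueFree_induce_neighborSet {n : ℕ} (h : G.CliqueFree (n + 1)) (v : α) :
    (G.induce (G.neighborSet v)).CliqueFree n := by
  rw [cliqueFree_induce_iff, ← Set.univ_inter (G.neighborSet v)]
  exact CliqueFreeOn.of_succ G (G.cliqueFreeOn_univ.2 h) (Set.mem_univ v)

lemma nonempty_W5_embedding_of_C5_embedding {v : α} (f : C5 ↪g G) (hv : ∀ i, G.Adj v (f i)) :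
    Nonempty (W5 ↪g G) := by
  let g : Fin 6 → α := Fin.lastCases v f
  have hlast : g (Fin.last 5) = v := Fin.lastCases_last
  have hcast (i : Fin 5) : g i.castSucc = f i := Fin.lastCases_castSucc i
  have hg : ∀ x y, G.Adj (g x) (g y) ↔ W5.Adj x y := by
    intro x y
    cases x using Fin.lastCases with
    | last => cases y using Fin.lastCases with
      | last => exact iff_of_false (G.irrefl) (W5.irrefl)
      | cast j => rw [hlast, hcast]; exact iff_of_true (hv j) (W5_adj_castSucc_last j).symm
    | cast i => cases y using Fin.lastCases with
      | last => rw [hlast, hcast]; exact iff_of_true (hv i).symm (W5_adj_castSucc_last i)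
      | cast j => rw [hcast, hcast, f.map_adj_iff, W5_adj_castSucc_castSucc]
  have hinj : Function.Injective g := by
    intro x y hxy
    cases x using Fin.lastCases with
    | last => cases y using Fin.lastCases with
      | last => rfl
      | cast j => rw [hlast, hcast] at hxy; exact absurd hxy (hv j).ne
    | cast i => cases y using Fin.lastCases with
      | last => rw [hlast, hcast] at hxy; exact absurd hxy (hv i).ne'
      | cast j => rw [hcast, hcast] at hxy; rw [f.injective hxy]
  exact ⟨⟨⟨g, hinj⟩, hg _ _⟩⟩

end SimpleGraph

lemma ClawFree.indepSetFree_induce_neighborSet {G : SimpleGraph V} (hcf : ClawFree G) (v : V) :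
    (G.induce (G.neighborSet v)).IndepSetFree 3 := by
  rintro t ⟨ht, hcard⟩
  obtain ⟨a, b, c, hab, hac, hbc, rfl⟩ := Finset.card_eq_three.1 hcard
  refine hcf v ⟨a, b, c, a.2, b.2, c.2, Subtype.val_injective.ne hab,
    Subtype.val_injective.ne hac, Subtype.val_injective.ne hbc, ht (by simp) (by simp) hab,
    ht (by simp) (by simp) hac, ht (by simp) (by simp) hbc⟩

theorem stmt_10_general {V : Type u} (G : SimpleGraph V)
    (hcf : ClawFree G) (hk4 : G.CliqueFree 4)
    (v : V) (h5 : 5 ≤ (G.neighborSet v).ncard) :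
    (∃ f : C5 ↪g G, ∀ i : Fin 5, f i ∈ G.neighborSet v) ∧
    Nonempty (W5 ↪g G) := by
  have : Finite (G.neighborSet v) := (Set.finite_of_ncard_ne_zero (by omega)).to_subtype
  obtain ⟨f⟩ := nonempty_C5_embedding_of_cliqueFree_of_indepSetFree
    (hk4.cliqueFree_induce_neighborSet v) (hcf.indepSetFree_induce_neighborSet v)
    (by rwa [Nat.card_coe_set_eq])
  let f' : C5 ↪g G := (Embedding.induce _).comp f
  exact ⟨⟨f', fun i => (f i).2⟩, nonempty_W5_embedding_of_C5_embedding f' fun i => (f i).2⟩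

/-- if a claw-free, `K₄`-free graph has a vertex `v` of degree at least 5,
then the neighbourhood of `v` contains an induced 5-cycle; hence `G` contains the
5-wheel `W₅` as an induced subgraph. -/
theorem stmt_10 {V : Type u} [Fintype V] (G : SimpleGraph V)
    (hcf : ClawFree G) (hk4 : G.CliqueFree 4)
    (v : V) (h5 : 5 ≤ (G.neighborSet v).ncard) :
    (∃ f : C5 ↪g G, ∀ i : Fin 5, f i ∈ G.neighborSet v) ∧
    Nonempty (W5 ↪g G) :=
  stmt_10_general G hcf hk4 v h5
end

section
/- Let G be a 2-connected claw-free graph with maximum degree at most 4 that is K_4-free, and suppose G has a skewed prism H (two triangles x1x2x3, y1y2y3 and linking paths P1,P2,P3) and a separation (G1,G2) with V(G1 ∩ G2) = {u,v} and uv ∉ E(G). Then one of the following holds: (a) H ∩ G1 is empty or H ∩ G2 is empty; or (c) H ∩ G1 is a subpath of one of P1, P2, P3, or H ∩ G2 is a subpath of one of P1, P2, P3. -/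
open SimpleGraph

attribute [local instance] Classical.propDecidable

universe u

variable {V : Type u}

/-! One of the three disjoint linking paths avoids both `u` and `v`, so it lies strictly on one
side, say in `A \ B`, and pulls both triangles into `A`. If some vertex of `H` lies outside `A`,
its linking path leaves `A` and comes back, so it passes through both `u` and `v`; then `H ∩ B` is
the subpath between them, and the other two paths stay in `A \ B`. Otherwise `H ⊆ A`, and if `u`
were on `H` it would be the centre of a claw: it has two non-adjacent neighbours in `H` (at the
triangles `K₄`-freeness supplies them), and 2-connectivity gives it a neighbour outside `A`, which
is adjacent to neither because `uv ∉ E(G)`. -/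

theorem List.exists_notMem_of_disjoint {α : Type*} {l₁ l₂ l₃ : List α} (h₁₂ : l₁.Disjoint l₂)
    (h₁₃ : l₁.Disjoint l₃) (h₂₃ : l₂.Disjoint l₃) (u v : α) :
    (u ∉ l₁ ∧ v ∉ l₁) ∨ (u ∉ l₂ ∧ v ∉ l₂) ∨ (u ∉ l₃ ∧ v ∉ l₃) := by
  simp only [List.disjoint_left] at h₁₂ h₁₃ h₂₃
  grind

namespace SimpleGraph

variable {G : SimpleGraph V}

def HasNonadjNeighborsIn (G : SimpleGraph V) (S : Set V) (w : V) : Prop :=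
  ∃ a ∈ S, ∃ b ∈ S, a ≠ b ∧ G.Adj w a ∧ G.Adj w b ∧ ¬G.Adj a b

theorem CliqueFree.hasNonadjNeighborsIn (hk4 : G.CliqueFree 4) {S : Set V} {w a b c : V}
    (haS : a ∈ S) (hbS : b ∈ S) (hcS : c ∈ S) (hab : a ≠ b) (hac : a ≠ c) (hbc : b ≠ c)
    (ha : G.Adj w a) (hb : G.Adj w b) (hc : G.Adj w c) : G.HasNonadjNeighborsIn S w := by
  by_contra h
  have hadj {p q : V} (hp : p ∈ S) (hq : q ∈ S) (hpq : p ≠ q) (hwp : G.Adj w p)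
      (hwq : G.Adj w q) : G.Adj p q :=
    by_contra fun hn => h ⟨p, hp, q, hq, hpq, hwp, hwq, hn⟩
  refine hk4 {w, a, b, c} ((is3Clique_triple_iff.2 ⟨?_, ?_, ?_⟩).insert ?_)
  · exact hadj haS hbS hab ha hb
  · exact hadj haS hcS hac ha hc
  · exact hadj hbS hcS hbc hb hc
  · simp [ha, hb, hc]

namespace Walk

theorem IsPath.not_adj_getVert_getVert_add_two {x y : V} {P : G.Walk x y} (hP : P.IsPath)
    (hPc : P.IsChordless) {i : ℕ} (hi : i + 1 < P.length) :
    ¬G.Adj (P.getVert i) (P.getVert (i + 2)) := by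
  intro hadj
  obtain ⟨j, hj, hji⟩ := P.mk_mem_edges_iff_exists.mp
    (hPc.mem_edges (P.getVert_mem_support i) (P.getVert_mem_support _) hadj)
  rcases Sym2.eq_iff.mp hji with ⟨h1, h2⟩ | ⟨h1, h2⟩ <;>
  · have := hP.getVert_injOn (by simp; omega) (by simp; omega) h1
    have := hP.getVert_injOn (by simp; omega) (by simp; omega) h2
    omega

theorem IsPath.eq_or_eq_or_hasNonadjNeighborsIn {x y w : V} {P : G.Walk x y} (hP : P.IsPath)
    (hPc : P.IsChordless) {S : Set V} (hPS : ∀ z ∈ P.support, z ∈ S) (hw : w ∈ P.support) :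
    w = x ∨ w = y ∨ G.HasNonadjNeighborsIn S w := by
  obtain ⟨k, rfl, hk⟩ := mem_support_iff_exists_getVert.mp hw
  rcases Nat.eq_zero_or_pos k with rfl | hk0
  · exact .inl P.getVert_zero
  rcases hk.eq_or_lt with rfl | hkl
  · exact .inr (.inl P.getVert_length)
  obtain ⟨i, rfl⟩ : ∃ i, k = i + 1 := ⟨k - 1, by omega⟩
  refine .inr (.inr ⟨_, hPS _ (P.getVert_mem_support i), _, hPS _ (P.getVert_mem_support (i + 2)),
    fun h => ?_, (P.adj_getVert_succ (by omega)).symm, P.adj_getVert_succ hkl,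
    hP.not_adj_getVert_getVert_add_two hPc hkl⟩)
  have := hP.getVert_injOn (by simp; omega) (by simp; omega) h
  omega

theorem IsPath.hasNonadjNeighborsIn (hk4 : G.CliqueFree 4) {S : Set V} {x y w : V}
    {P : G.Walk x y} (hP : P.IsPath) (hPc : P.IsChordless) (hPS : ∀ z ∈ P.support, z ∈ S)
    (hx : ∃ a ∈ S, ∃ b ∈ S, a ≠ b ∧ a ∉ P.support ∧ b ∉ P.support ∧ G.Adj x a ∧ G.Adj x b)
    (hy : ∃ a ∈ S, ∃ b ∈ S, a ≠ b ∧ a ∉ P.support ∧ b ∉ P.support ∧ G.Adj y a ∧ G.Adj y b)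
    (hxy : x = y → G.HasNonadjNeighborsIn S x) (hw : w ∈ P.support) :
    G.HasNonadjNeighborsIn S w := by
  -- at an end, the two given neighbours and the next vertex of `P` are three neighbours
  rcases hP.eq_or_eq_or_hasNonadjNeighborsIn hPc hPS hw with rfl | rfl | h
  · by_cases hwy : w = y
    · exact hxy hwy
    have hn : ¬P.Nil := by rwa [hP.nil_iff_eq]
    obtain ⟨a, haS, b, hbS, hab, haP, hbP, ha, hb⟩ := hx
    have hc := P.getVert_mem_support 1
    exact hk4.hasNonadjNeighborsIn haS hbS (hPS _ hc) hab (hc.ne_of_notMem haP).symm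
      (hc.ne_of_notMem hbP).symm ha hb (adj_snd hn)
  · by_cases hxw : x = w
    · exact hxw ▸ hxy hxw
    have hn : ¬P.Nil := by rwa [hP.nil_iff_eq]
    obtain ⟨a, haS, b, hbS, hab, haP, hbP, ha, hb⟩ := hy
    have hc := P.getVert_mem_support (P.length - 1)
    exact hk4.hasNonadjNeighborsIn haS hbS (hPS _ hc) hab (hc.ne_of_notMem haP).symm
      (hc.ne_of_notMem hbP).symm ha hb (adj_penultimate hn).symm
  · exact h

theorem exists_isSubwalk_support_iff {a b : V} (p : G.Walk a b) {i j : ℕ} (hij : i ≤ j)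
    (hj : j ≤ p.length) : ∃ (c d : V) (W : G.Walk c d), W.IsSubwalk p ∧
      ∀ z, z ∈ W.support ↔ ∃ k, i ≤ k ∧ k ≤ j ∧ p.getVert k = z := by
  refine ⟨_, _, (p.drop i).take (j - i), (isSubwalk_take _ _).trans (isSubwalk_drop _ _),
    fun z => ?_⟩
  simp only [mem_support_iff_exists_getVert, take_getVert, drop_getVert, take_length,
    drop_length]
  constructor
  · rintro ⟨n, rfl, hn⟩
    exact ⟨i + min (j - i) n, by omega, by omega, rfl⟩
  · rintro ⟨k, hik, hkj, rfl⟩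
    exact ⟨k - i, by congr 1; omega, by omega⟩

end Walk

theorem exists_walk_notMem_support {v : V}
    (hconn : ((⊤ : G.Subgraph).deleteVerts {v}).coe.Connected) {a b : V} (ha : a ≠ v)
    (hb : b ≠ v) : ∃ p : G.Walk a b, v ∉ p.support := by
  obtain ⟨q⟩ := hconn.preconnected ⟨a, by simpa using ha⟩ ⟨b, by simpa using hb⟩
  have hv : v ∉ (q.map (Subgraph.hom _)).support := by
    rw [Walk.support_map, List.mem_map]
    rintro ⟨z, -, hz⟩
    exact z.2.2 hz
  exact ⟨_, hv⟩

/-- `A` and `B` are the vertex sets of the two sides of a separation, not necessarily proper. -/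
def IsSeparation (G : SimpleGraph V) (A B : Set V) : Prop :=
  A ∪ B = Set.univ ∧ ∀ e ∈ G.edgeSet, (∀ x ∈ e, x ∈ A) ∨ (∀ x ∈ e, x ∈ B)

namespace IsSeparation

variable {A B : Set V} {u v : V}

theorem symm (hS : G.IsSeparation A B) : G.IsSeparation B A :=
  ⟨Set.union_comm A B ▸ hS.1, fun e he => (hS.2 e he).symm⟩

theorem mem_of_adj (hS : G.IsSeparation A B) {a b : V} (hab : G.Adj a b) (ha : a ∉ B) : b ∈ A :=
  (hS.2 s(a, b) hab).elim (· b (Sym2.mem_mk_right a b))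
    fun h => absurd (h a (Sym2.mem_mk_left a b)) ha

theorem mem_inter_of_adj (hS : G.IsSeparation A B) {a b : V} (hab : G.Adj a b) (ha : a ∉ A)
    (hb : b ∈ A) : b ∈ A ∩ B :=
  ⟨hb, hS.symm.mem_of_adj hab ha⟩

theorem mem_of_adj_of_adj (hS : G.IsSeparation A B) {a b c : V} (ha : a ∉ B) (hab : G.Adj a b)
    (hac : G.Adj a c) : a ∈ A ∧ b ∈ A ∧ c ∈ A :=
  ⟨(hS.1 ▸ Set.mem_univ a : a ∈ A ∪ B).resolve_right ha, hS.mem_of_adj hab ha,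
    hS.mem_of_adj hac ha⟩

theorem notMem_of_mem_support (hS : G.IsSeparation A B) {a c : V} (p : G.Walk a c) (ha : a ∉ B)
    (hp : ∀ z ∈ p.support, z ∉ A ∩ B) : ∀ z ∈ p.support, z ∉ B := by
  induction p with
  | nil => simpa using ha
  | @cons a b c hab q ih =>
    have hq : ∀ z ∈ q.support, z ∉ A ∩ B := fun z hz => hp z (List.mem_cons_of_mem _ hz)
    have hb : b ∉ B := fun hb => hq b q.start_mem_support ⟨hS.mem_of_adj hab ha, hb⟩
    simpa [ha] using ih hb hq

theorem ends_notMem (hS : G.IsSeparation A B) (hsep : A ∩ B = {u, v}) {x y : V}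
    (p : G.Walk x y) (hu : u ∉ p.support) (hv : v ∉ p.support) :
    (x ∉ B ∧ y ∉ B) ∨ (x ∉ A ∧ y ∉ A) := by
  have hp : ∀ z ∈ p.support, z ∉ A ∩ B := by
    rw [hsep]
    rintro z hz (rfl | rfl)
    exacts [hu hz, hv hz]
  rcases (hS.1 ▸ Set.mem_univ x : x ∈ A ∪ B) with hx | hx
  · have hxB : x ∉ B := fun hxB => hp x p.start_mem_support ⟨hx, hxB⟩
    exact .inl ⟨hxB, hS.notMem_of_mem_support p hxB hp y p.end_mem_support⟩
  · have hxA : x ∉ A := fun hxA => hp x p.start_mem_support ⟨hxA, hx⟩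
    refine .inr ⟨hxA, hS.symm.notMem_of_mem_support p hxA ?_ y p.end_mem_support⟩
    rwa [Set.inter_comm]

theorem exists_getVert_mem_inter_of_le (hS : G.IsSeparation A B) {a c : V} (p : G.Walk a c)
    {m n : ℕ} (hmn : m ≤ n) (hn : n ≤ p.length) (hm : p.getVert m ∉ A) (hnA : p.getVert n ∈ A) :
    ∃ k, m < k ∧ k ≤ n ∧ p.getVert k ∈ A ∩ B := by
  induction n, hmn using Nat.le_induction with
  | base => exact absurd hnA hm
  | succ n hmn ih =>
    by_cases h : p.getVert n ∈ A
    · obtain ⟨k, hmk, hkn, hk⟩ := ih (by omega) h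
      exact ⟨k, hmk, by omega, hk⟩
    · exact ⟨n + 1, by omega, le_rfl, hS.mem_inter_of_adj (p.adj_getVert_succ (by omega)) h hnA⟩

theorem exists_getVert_mem_inter (hS : G.IsSeparation A B) {a c : V} (p : G.Walk a c) {m n : ℕ}
    (hm : m ≤ p.length) (hn : n ≤ p.length) (hmA : p.getVert m ∉ A) (hnA : p.getVert n ∈ A) :
    ∃ k ≤ p.length, p.getVert k ∈ A ∩ B ∧ (m < k ∧ k ≤ n ∨ n ≤ k ∧ k < m) := by
  rcases le_total m n with hmn | hnm
  · obtain ⟨k, hmk, hkn, hk⟩ := hS.exists_getVert_mem_inter_of_le p hmn hn hmA hnA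
    exact ⟨k, by omega, hk, .inl ⟨hmk, hkn⟩⟩
  · obtain ⟨k, hmk, hkn, hk⟩ := hS.exists_getVert_mem_inter_of_le p.reverse
      (m := p.length - m) (n := p.length - n) (by omega) (by simp)
      (by rwa [Walk.getVert_reverse, Nat.sub_sub_self hm])
      (by rwa [Walk.getVert_reverse, Nat.sub_sub_self hn])
    rw [Walk.getVert_reverse] at hk
    exact ⟨p.length - k, by omega, hk, .inr ⟨by omega, by omega⟩⟩

theorem exists_getVert_mem_iff (hS : G.IsSeparation A B) (hsep : A ∩ B = {u, v}) {x y : V}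
    {P : G.Walk x y} (hP : P.IsPath) (hx : x ∈ A) (hy : y ∈ A) {k₀ : ℕ} (hk₀ : k₀ ≤ P.length)
    (hb : P.getVert k₀ ∉ A) :
    A ∩ B ⊆ {z | z ∈ P.support} ∧ ∃ i j, i ≤ j ∧ j ≤ P.length ∧
      ∀ k ≤ P.length, (P.getVert k ∈ B ↔ i ≤ k ∧ k ≤ j) := by
  have hx' : P.getVert 0 ∈ A := by rwa [P.getVert_zero]
  have hy' : P.getVert P.length ∈ A := by rwa [P.getVert_length]
  obtain ⟨i, hi, hiAB, hik⟩ := hS.exists_getVert_mem_inter P hk₀ (Nat.zero_le _) hb hx'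
  obtain ⟨j, hj, hjAB, hjk⟩ := hS.exists_getVert_mem_inter P hk₀ le_rfl hb hy'
  have hinj {k l : ℕ} (hk : k ≤ P.length) (hl : l ≤ P.length) (h : P.getVert k = P.getVert l) :
      k = l := hP.getVert_injOn hk hl h
  have hAB : A ∩ B = {P.getVert i, P.getVert j} := by
    have hne : P.getVert i ≠ P.getVert j := fun h => by have := hinj hi hj h; omega
    rw [hsep] at hiAB hjAB ⊢
    rcases hiAB with h1 | h1 <;> rcases hjAB with h2 | h2 <;> simp_all [Set.pair_comm]
  have hcut : ∀ k ≤ P.length, P.getVert k ∈ A ∩ B → k = i ∨ k = j := by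
    intro k hk h
    rw [hAB] at h
    exact h.imp (hinj hk hi) (hinj hk hj)
  refine ⟨?_, i, j, by omega, hj, fun k hk => ⟨fun hkB => ?_, fun ⟨hik', hkj⟩ => ?_⟩⟩
  · rw [hAB]
    rintro z (rfl | rfl) <;> exact P.getVert_mem_support _
  · by_cases hkA : P.getVert k ∈ A
    · rcases hcut k hk ⟨hkA, hkB⟩ with rfl | rfl <;> omega
    obtain ⟨l, hl, hlAB, hlk⟩ := hS.exists_getVert_mem_inter P hk (Nat.zero_le _) hkA hx'
    obtain ⟨l', hl', hlAB', hlk'⟩ := hS.exists_getVert_mem_inter P hk le_rfl hkA hy'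
    rcases hcut l hl hlAB with rfl | rfl <;> rcases hcut l' hl' hlAB' with rfl | rfl <;> omega
  · by_contra hkB
    have hik : k ≠ i := fun h => hkB (h ▸ hiAB.2)
    have hjk : k ≠ j := fun h => hkB (h ▸ hjAB.2)
    have hk₀B : P.getVert k₀ ∈ B := (hS.1 ▸ Set.mem_univ _ : _ ∈ A ∪ B).resolve_left hb
    obtain ⟨l, hl, hlAB, hlk⟩ := hS.symm.exists_getVert_mem_inter P hk hk₀ hkB hk₀B
    rcases hcut l hl (Set.inter_comm B A ▸ hlAB) with rfl | rfl <;> omega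

theorem exists_isSubwalk_inter_eq (hS : G.IsSeparation A B) (hsep : A ∩ B = {u, v})
    {x y x' y' x'' y'' : V} {P : G.Walk x y} {Q : G.Walk x' y'} {R : G.Walk x'' y''}
    (hP : P.IsPath) (hPQ : P.support.Disjoint Q.support) (hPR : P.support.Disjoint R.support)
    (hx : x ∈ A) (hy : y ∈ A) (hx' : x' ∈ A) (hx'' : x'' ∈ A) {b : V} (hb : b ∈ P.support)
    (hbA : b ∉ A) : ∃ (c d : V) (W : G.Walk c d), W.IsSubwalk P ∧
      {z | z ∈ P.support ∨ z ∈ Q.support ∨ z ∈ R.support} ∩ B = {z | z ∈ W.support} := by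
  obtain ⟨k₀, rfl, hk₀⟩ := Walk.mem_support_iff_exists_getVert.mp hb
  obtain ⟨hABP, i, j, hij, hj, hPB⟩ := hS.exists_getVert_mem_iff hsep hP hx hy hk₀ hbA
  obtain ⟨c, d, W, hW, hWs⟩ := P.exists_isSubwalk_support_iff hij hj
  have hoff {a e : V} (T : G.Walk a e) (hPT : P.support.Disjoint T.support) (ha : a ∈ A) :
      ∀ z ∈ T.support, z ∉ B := by
    have hT : ∀ z ∈ T.support, z ∉ A ∩ B := fun z hz hzAB => hPT (hABP hzAB) hz
    exact hS.notMem_of_mem_support T (fun haB => hT a T.start_mem_support ⟨ha, haB⟩) hT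
  refine ⟨c, d, W, hW, Set.ext fun z => ?_⟩
  simp only [Set.mem_inter_iff, Set.mem_ofPred_eq, hWs]
  constructor
  · rintro ⟨hz | hz | hz, hzB⟩
    · obtain ⟨k, rfl, hk⟩ := Walk.mem_support_iff_exists_getVert.mp hz
      exact ⟨k, ((hPB k hk).mp hzB).1, ((hPB k hk).mp hzB).2, rfl⟩
    · exact absurd hzB (hoff Q hPQ hx' z hz)
    · exact absurd hzB (hoff R hPR hx'' z hz)
  · rintro ⟨k, hik, hkj, rfl⟩
    exact ⟨.inl (P.getVert_mem_support k), (hPB k (by omega)).mpr ⟨hik, hkj⟩⟩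

theorem exists_adj_notMem (hS : G.IsSeparation A B) (hsep : A ∩ B = {u, v})
    (hconn : ((⊤ : G.Subgraph).deleteVerts {v}).coe.Connected) (huv : u ≠ v)
    (hA : ∃ z, z ∉ A) : ∃ w, G.Adj u w ∧ w ∉ A := by
  obtain ⟨z, hz⟩ := hA
  have hu : u ∈ A ∩ B := hsep ▸ Set.mem_insert u {v}
  have hv : v ∈ A ∩ B := hsep ▸ Set.mem_insert_of_mem u rfl
  obtain ⟨p, hp⟩ := exists_walk_notMem_support hconn (fun h : z = v => hz (h ▸ hv.1)) huv
  obtain ⟨d, hd, hd₁, hd₂⟩ := p.exists_boundary_dart Aᶜ hz (not_not.mpr hu.1)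
  have hd₂AB := hS.mem_inter_of_adj d.adj hd₁ (not_not.mp hd₂)
  rw [hsep] at hd₂AB
  rcases hd₂AB with h | h
  · exact ⟨d.fst, h ▸ d.adj.symm, hd₁⟩
  · exact absurd (h ▸ p.dart_snd_mem_support_of_mem_darts hd) hp

theorem not_hasNonadjNeighborsIn (hS : G.IsSeparation A B) (hcf : ClawFree G)
    (hsep : A ∩ B = {u, v}) (hnadj : ¬G.Adj u v) {S : Set V} (hSA : S ⊆ A) {w : V}
    (huw : G.Adj u w) (hwA : w ∉ A) : ¬G.HasNonadjNeighborsIn S u := by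
  rintro ⟨a, ha, b, hb, hab, hua, hub, hnab⟩
  have hw : ∀ c ∈ S, G.Adj u c → ¬G.Adj c w := by
    intro c hc huc hcw
    have hcAB := hS.mem_inter_of_adj hcw.symm hwA (hSA hc)
    rw [hsep] at hcAB
    rcases hcAB with rfl | rfl
    · exact huc.ne rfl
    · exact hnadj huc
  exact hcf u ⟨a, b, w, hua, hub, huw, hab, ne_of_mem_of_not_mem (hSA ha) hwA,
    ne_of_mem_of_not_mem (hSA hb) hwA, hnab, hw a ha hua, hw b hb hub⟩

end IsSeparation

namespace IsSkewedPrism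

variable {x₁ x₂ x₃ y₁ y₂ y₃ : V} {P₁ : G.Walk x₁ y₁} {P₂ : G.Walk x₂ y₂} {P₃ : G.Walk x₃ y₃}

theorem isChordless (hH : IsSkewedPrism G x₁ x₂ x₃ y₁ y₂ y₃ P₁ P₂ P₃) :
    P₁.IsChordless ∧ P₂.IsChordless ∧ P₃.IsChordless := by
  obtain ⟨-, -, -, -, -, -, h12, h13, h23, -, -, -, -, -, -, hiff⟩ := hH
  simp only [List.disjoint_left] at h12 h13 h23
  refine ⟨?_, ?_, ?_⟩ <;>
    refine Walk.isChordless_iff_forall_mem_edges.mpr fun a b ha hb hab => ?_ <;>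
  · -- every edge of `H` other than the edges of `Pᵢ` has an end off `Pᵢ`
    have h := (hiff a b (by simp [ha]) (by simp [hb])).mp hab
    clear hiff hab
    simp only [List.mem_cons, List.not_mem_nil, or_false, Sym2.eq_iff] at h
    grind (splits := 40) [Walk.start_mem_support, Walk.end_mem_support,
      Walk.fst_mem_support_of_mem_edges]

theorem hasNonadjNeighborsIn (hH : IsSkewedPrism G x₁ x₂ x₃ y₁ y₂ y₃ P₁ P₂ P₃)
    (hk4 : G.CliqueFree 4) {w : V}
    (hw : w ∈ {z | z ∈ P₁.support ∨ z ∈ P₂.support ∨ z ∈ P₃.support}) :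
    G.HasNonadjNeighborsIn {z | z ∈ P₁.support ∨ z ∈ P₂.support ∨ z ∈ P₃.support} w := by
  obtain ⟨hc₁, hc₂, hc₃⟩ := hH.isChordless
  obtain ⟨hP₁, hP₂, hP₃, -, -, ho₃, h12, h13, h23, hx12, hx13, hx23, hy12, hy13, hy23, -⟩ := hH
  have hxy₃ : x₃ ≠ y₃ := by
    intro h
    rw [← hP₃.nil_iff_eq, ← Walk.length_eq_zero_iff] at h
    exact Nat.not_odd_zero (h ▸ ho₃)
  have hx₁ := P₁.start_mem_support; have hx₂ := P₂.start_mem_support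
  have hx₃ := P₃.start_mem_support; have hy₁ := P₁.end_mem_support
  have hy₂ := P₂.end_mem_support; have hy₃ := P₃.end_mem_support
  rcases hw with hw | hw | hw
  · refine hP₁.hasNonadjNeighborsIn hk4 hc₁ (fun _ => .inl)
      ⟨x₂, .inr (.inl hx₂), x₃, .inr (.inr hx₃), hx23.ne, (h12 · hx₂), (h13 · hx₃), hx12, hx13⟩
      ⟨y₂, .inr (.inl hy₂), y₃, .inr (.inr hy₃), hy23.ne, (h12 · hy₂), (h13 · hy₃), hy12, hy13⟩
      (fun h => ?_) hw
    exact hk4.hasNonadjNeighborsIn (.inr (.inl hx₂)) (.inr (.inr hx₃)) (.inr (.inr hy₃))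
      hx23.ne (hx₂.ne_of_notMem (h23 · hy₃)) hxy₃ hx12 hx13 (h ▸ hy13)
  · refine hP₂.hasNonadjNeighborsIn hk4 hc₂ (fun _ => .inr ∘ .inl)
      ⟨x₁, .inl hx₁, x₃, .inr (.inr hx₃), hx13.ne, (h12 hx₁ ·), (h23 · hx₃), hx12.symm, hx23⟩
      ⟨y₁, .inl hy₁, y₃, .inr (.inr hy₃), hy13.ne, (h12 hy₁ ·), (h23 · hy₃), hy12.symm, hy23⟩
      (fun h => ?_) hw
    exact hk4.hasNonadjNeighborsIn (.inl hx₁) (.inr (.inr hx₃)) (.inr (.inr hy₃))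
      hx13.ne (hx₁.ne_of_notMem (h13 · hy₃)) hxy₃ hx12.symm hx23 (h ▸ hy23)
  · exact hP₃.hasNonadjNeighborsIn hk4 hc₃ (fun _ => .inr ∘ .inr)
      ⟨x₁, .inl hx₁, x₂, .inr (.inl hx₂), hx12.ne, (h13 hx₁ ·), (h23 hx₂ ·), hx13.symm, hx23.symm⟩
      ⟨y₁, .inl hy₁, y₂, .inr (.inl hy₂), hy12.ne, (h13 hy₁ ·), (h23 hy₂ ·), hy13.symm, hy23.symm⟩
      (absurd · hxy₃) hw

theorem triangles_mem_or_mem (hH : IsSkewedPrism G x₁ x₂ x₃ y₁ y₂ y₃ P₁ P₂ P₃) {u v : V}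
    {A B : Set V} (hS : G.IsSeparation A B) (hsep : A ∩ B = {u, v}) :
    (x₁ ∈ A ∧ x₂ ∈ A ∧ x₃ ∈ A ∧ y₁ ∈ A ∧ y₂ ∈ A ∧ y₃ ∈ A) ∨
      (x₁ ∈ B ∧ x₂ ∈ B ∧ x₃ ∈ B ∧ y₁ ∈ B ∧ y₂ ∈ B ∧ y₃ ∈ B) := by
  obtain ⟨-, -, -, -, -, -, h12, h13, h23, hx12, hx13, hx23, hy12, hy13, hy23, -⟩ := hH
  have hside {A B : Set V} (hS : G.IsSeparation A B)
      (h : (x₁ ∉ B ∧ y₁ ∉ B) ∨ (x₂ ∉ B ∧ y₂ ∉ B) ∨ (x₃ ∉ B ∧ y₃ ∉ B)) :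
      x₁ ∈ A ∧ x₂ ∈ A ∧ x₃ ∈ A ∧ y₁ ∈ A ∧ y₂ ∈ A ∧ y₃ ∈ A := by
    rcases h with ⟨hx, hy⟩ | ⟨hx, hy⟩ | ⟨hx, hy⟩
    · obtain ⟨h₁, h₂, h₃⟩ := hS.mem_of_adj_of_adj hx hx12 hx13
      obtain ⟨h₄, h₅, h₆⟩ := hS.mem_of_adj_of_adj hy hy12 hy13
      exact ⟨h₁, h₂, h₃, h₄, h₅, h₆⟩
    · obtain ⟨h₂, h₁, h₃⟩ := hS.mem_of_adj_of_adj hx hx12.symm hx23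
      obtain ⟨h₅, h₄, h₆⟩ := hS.mem_of_adj_of_adj hy hy12.symm hy23
      exact ⟨h₁, h₂, h₃, h₄, h₅, h₆⟩
    · obtain ⟨h₃, h₁, h₂⟩ := hS.mem_of_adj_of_adj hx hx13.symm hx23.symm
      obtain ⟨h₆, h₄, h₅⟩ := hS.mem_of_adj_of_adj hy hy13.symm hy23.symm
      exact ⟨h₁, h₂, h₃, h₄, h₅, h₆⟩
  rcases List.exists_notMem_of_disjoint h12 h13 h23 u v with ⟨hu, hv⟩ | ⟨hu, hv⟩ | ⟨hu, hv⟩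
  · exact (hS.ends_notMem hsep P₁ hu hv).imp (hside hS <| .inl ·) (hside hS.symm <| .inl ·)
  · exact (hS.ends_notMem hsep P₂ hu hv).imp (hside hS <| .inr <| .inl ·)
      (hside hS.symm <| .inr <| .inl ·)
  · exact (hS.ends_notMem hsep P₃ hu hv).imp (hside hS <| .inr <| .inr ·)
      (hside hS.symm <| .inr <| .inr ·)

theorem inter_eq_empty_or_eq_support (hH : IsSkewedPrism G x₁ x₂ x₃ y₁ y₂ y₃ P₁ P₂ P₃)
    (h2 : TwoConnected G) (hcf : ClawFree G) (hk4 : G.CliqueFree 4) {u v : V} {A B : Set V}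
    (hS : G.IsSeparation A B) (hA : ∃ z, z ∉ A) (hsep : A ∩ B = {u, v}) (huv : u ≠ v)
    (hnadj : ¬G.Adj u v)
    (hx₁ : x₁ ∈ A) (hx₂ : x₂ ∈ A) (hx₃ : x₃ ∈ A) (hy₁ : y₁ ∈ A) (hy₂ : y₂ ∈ A) (hy₃ : y₃ ∈ A) :
    {z | z ∈ P₁.support ∨ z ∈ P₂.support ∨ z ∈ P₃.support} ∩ B = ∅ ∨
    ∃ (c d : V) (W : G.Walk c d), W.IsPath ∧
      (W.support <:+: P₁.support ∨ W.support <:+: P₂.support ∨ W.support <:+: P₃.support) ∧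
      {z | z ∈ P₁.support ∨ z ∈ P₂.support ∨ z ∈ P₃.support} ∩ B = {z | z ∈ W.support} := by
  set S := {z | z ∈ P₁.support ∨ z ∈ P₂.support ∨ z ∈ P₃.support}
  by_cases hSA : S ⊆ A
  · have hnotMem {u v : V} (hsep : A ∩ B = {u, v}) (huv : u ≠ v) (hnadj : ¬G.Adj u v) : u ∉ S := by
      intro hu
      obtain ⟨w, huw, hwA⟩ := hS.exists_adj_notMem hsep (h2.2 v) huv hA
      exact hS.not_hasNonadjNeighborsIn hcf hsep hnadj hSA huw hwA
        (hH.hasNonadjNeighborsIn hk4 hu)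
    refine .inl (Set.eq_empty_of_forall_notMem fun z ⟨hzS, hzB⟩ => ?_)
    have hzAB : z ∈ A ∩ B := ⟨hSA hzS, hzB⟩
    rw [hsep] at hzAB
    rcases hzAB with rfl | rfl
    · exact hnotMem hsep huv hnadj hzS
    · exact hnotMem (hsep.trans (Set.pair_comm _ _)) huv.symm (hnadj ·.symm) hzS
  obtain ⟨b, hbS, hbA⟩ := Set.not_subset.mp hSA
  obtain ⟨hP₁, hP₂, hP₃, -, -, -, h12, h13, h23, -⟩ := hH
  have hperm₂ : {z | z ∈ P₂.support ∨ z ∈ P₁.support ∨ z ∈ P₃.support} = S := by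
    ext; simp only [S, Set.mem_ofPred_eq]; tauto
  have hperm₃ : {z | z ∈ P₃.support ∨ z ∈ P₁.support ∨ z ∈ P₂.support} = S := by
    ext; simp only [S, Set.mem_ofPred_eq]; tauto
  right
  rcases hbS with hb | hb | hb
  · obtain ⟨c, d, W, hW, hWS⟩ :=
      hS.exists_isSubwalk_inter_eq hsep hP₁ h12 h13 hx₁ hy₁ hx₂ hx₃ hb hbA
    exact ⟨c, d, W, Walk.isPath_of_isSubwalk hW hP₁,
      .inl (Walk.isSubwalk_iff_support_isInfix.mp hW), hWS⟩
  · obtain ⟨c, d, W, hW, hWS⟩ :=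
      hS.exists_isSubwalk_inter_eq hsep hP₂ h12.symm h23 hx₂ hy₂ hx₁ hx₃ hb hbA
    exact ⟨c, d, W, Walk.isPath_of_isSubwalk hW hP₂,
      .inr (.inl (Walk.isSubwalk_iff_support_isInfix.mp hW)), hperm₂ ▸ hWS⟩
  · obtain ⟨c, d, W, hW, hWS⟩ :=
      hS.exists_isSubwalk_inter_eq hsep hP₃ h13.symm h23.symm hx₃ hy₃ hx₁ hx₂ hb hbA
    exact ⟨c, d, W, Walk.isPath_of_isSubwalk hW hP₃,
      .inr (.inr (Walk.isSubwalk_iff_support_isInfix.mp hW)), hperm₃ ▸ hWS⟩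

end IsSkewedPrism

end SimpleGraph

theorem stmt_16_general {V : Type u} (G : SimpleGraph V)
    (h2 : TwoConnected G) (hcf : ClawFree G) (hk4 : G.CliqueFree 4)
    (x₁ x₂ x₃ y₁ y₂ y₃ : V)
    (P₁ : G.Walk x₁ y₁) (P₂ : G.Walk x₂ y₂) (P₃ : G.Walk x₃ y₃)
    (hH : IsSkewedPrism G x₁ x₂ x₃ y₁ y₂ y₃ P₁ P₂ P₃)
    (V₁ V₂ : Set V) (hunion : V₁ ∪ V₂ = Set.univ)
    (hprop₁ : V₁ ≠ Set.univ) (hprop₂ : V₂ ≠ Set.univ)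
    (hedges : ∀ e ∈ G.edgeSet, (∀ x ∈ e, x ∈ V₁) ∨ (∀ x ∈ e, x ∈ V₂))
    (u v : V) (huv : u ≠ v) (hsep : V₁ ∩ V₂ = {u, v}) (hnadj : ¬ G.Adj u v) :
    -- the vertex set of the skewed prism
    (({x | x ∈ P₁.support ∨ x ∈ P₂.support ∨ x ∈ P₃.support} ∩ V₁ = ∅) ∨
     ({x | x ∈ P₁.support ∨ x ∈ P₂.support ∨ x ∈ P₃.support} ∩ V₂ = ∅)) ∨
    ((∃ (c d : V) (W : G.Walk c d), W.IsPath ∧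
        (W.support <:+: P₁.support ∨ W.support <:+: P₂.support ∨
          W.support <:+: P₃.support) ∧
        {x | x ∈ P₁.support ∨ x ∈ P₂.support ∨ x ∈ P₃.support} ∩ V₁ =
          {x | x ∈ W.support}) ∨
     (∃ (c d : V) (W : G.Walk c d), W.IsPath ∧
        (W.support <:+: P₁.support ∨ W.support <:+: P₂.support ∨
          W.support <:+: P₃.support) ∧
        {x | x ∈ P₁.support ∨ x ∈ P₂.support ∨ x ∈ P₃.support} ∩ V₂ =
          {x | x ∈ W.support})) := by
  have hS : G.IsSeparation V₁ V₂ := ⟨hunion, hedges⟩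
  rcases hH.triangles_mem_or_mem hS hsep with ⟨h₁, h₂, h₃, h₄, h₅, h₆⟩ | ⟨h₁, h₂, h₃, h₄, h₅, h₆⟩
  · rcases hH.inter_eq_empty_or_eq_support h2 hcf hk4 hS
      (Set.ne_univ_iff_exists_notMem _ |>.mp hprop₁) hsep huv hnadj h₁ h₂ h₃ h₄ h₅ h₆ with h | h
    · exact .inl (.inr h)
    · exact .inr (.inr h)
  · rcases hH.inter_eq_empty_or_eq_support h2 hcf hk4 hS.symm
      (Set.ne_univ_iff_exists_notMem _ |>.mp hprop₂) (Set.inter_comm V₂ V₁ ▸ hsep) huv hnadj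
      h₁ h₂ h₃ h₄ h₅ h₆ with h | h
    · exact .inl (.inl h)
    · exact .inr (.inl h)

/-- let `G` be 2-connected, claw-free, `K₄`-free with maximum degree at
most 4, `H` a skewed prism of `G` with linking paths `P₁,P₂,P₃`, and `(G₁,G₂)` a
separation with `V(G₁) ∩ V(G₂) = {u,v}` and `uv ∉ E(G)`. Then (a) `H ∩ G₁` or `H ∩ G₂`
is empty, or (c) `H ∩ G₁` or `H ∩ G₂` is a subpath of one of `P₁,P₂,P₃`. -/
theorem stmt_16 {V : Type u} [Fintype V] (G : SimpleGraph V)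
    (h2 : TwoConnected G) (hcf : ClawFree G) (hk4 : G.CliqueFree 4)
    (hdeg : ∀ w : V, (G.neighborSet w).ncard ≤ 4)
    (x₁ x₂ x₃ y₁ y₂ y₃ : V)
    (P₁ : G.Walk x₁ y₁) (P₂ : G.Walk x₂ y₂) (P₃ : G.Walk x₃ y₃)
    (hH : IsSkewedPrism G x₁ x₂ x₃ y₁ y₂ y₃ P₁ P₂ P₃)
    (V₁ V₂ : Set V) (hunion : V₁ ∪ V₂ = Set.univ)
    (hprop₁ : V₁ ≠ Set.univ) (hprop₂ : V₂ ≠ Set.univ)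
    (hedges : ∀ e ∈ G.edgeSet, (∀ x ∈ e, x ∈ V₁) ∨ (∀ x ∈ e, x ∈ V₂))
    (u v : V) (huv : u ≠ v) (hsep : V₁ ∩ V₂ = {u, v}) (hnadj : ¬ G.Adj u v) :
    -- the vertex set of the skewed prism
    (({x | x ∈ P₁.support ∨ x ∈ P₂.support ∨ x ∈ P₃.support} ∩ V₁ = ∅) ∨
     ({x | x ∈ P₁.support ∨ x ∈ P₂.support ∨ x ∈ P₃.support} ∩ V₂ = ∅)) ∨
    ((∃ (c d : V) (W : G.Walk c d), W.IsPath ∧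
        (W.support <:+: P₁.support ∨ W.support <:+: P₂.support ∨
          W.support <:+: P₃.support) ∧
        {x | x ∈ P₁.support ∨ x ∈ P₂.support ∨ x ∈ P₃.support} ∩ V₁ =
          {x | x ∈ W.support}) ∨
     (∃ (c d : V) (W : G.Walk c d), W.IsPath ∧
        (W.support <:+: P₁.support ∨ W.support <:+: P₂.support ∨
          W.support <:+: P₃.support) ∧
        {x | x ∈ P₁.support ∨ x ∈ P₂.support ∨ x ∈ P₃.support} ∩ V₂ =
          {x | x ∈ W.support})) :=
  stmt_16_general G h2 hcf hk4 x₁ x₂ x₃ y₁ y₂ y₃ P₁ P₂ P₃ hH V₁ V₂ hunion hprop₁ hprop₂ hedges u v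
    huv hsep hnadj
end
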